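/- arXiv:1205.2167 — 4 statements merged into one kernel-verified Lean document; each statement's English description precedes it below -/
import Mathlib

section
/- Let u_m^k solve the Lax–Friedrichs scheme (2.1) and v_{m+1}^k solve the Hamilton–Jacobi scheme (2.3), with initial data related by (2.2) and (2.4). Then each solution is derived from the other: if v_{m+1}^k solves (2.3) then u_m^k := D_x v_{m+1}^k solves (2.1); conversely, if u_m^k solves (2.1) then there exists a solution v_{m+1}^k of (2.3) with D_x v_{m+1}^k = u_m^k. In particular D_x v_{m+1}^k = u_m^k for all m and k. -/
open scoped BigOperators Classical

noncomputable section

/-- Space mesh `Δx = 1/(2N)`. -/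
def dx (N : ℕ) : ℝ := 1 / (2 * N)

/-- Time mesh `Δt = 1/(2K)`. -/
def dt (K : ℕ) : ℝ := 1 / (2 * K)

/-- The discretized initial datum (2.2): `u_Δ^0(x)` is the cell average of `u^0` over
`[x_m - Δx, x_m + Δx)`, where `m = m(x)` is the even integer with `x ∈ [x_m - Δx, x_m + Δx)`. -/
def uD0 (N : ℕ) (u0 : ℝ → ℝ) (x : ℝ) : ℝ :=
  (1 / (2 * dx N)) *
    ∫ y in (((2 * ⌊(x / dx N + 1) / 2⌋ : ℤ) : ℝ) * dx N - dx N)..(((2 * ⌊(x / dx N + 1) / 2⌋ : ℤ) : ℝ) * dx N + dx N),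
      u0 y

/-- The discretized initial datum (2.4): `v_Δ^0(x) = v^0(0) + ∫_0^x u_Δ^0(y) dy`. -/
def vD0 (N : ℕ) (u0 v0 : ℝ → ℝ) (x : ℝ) : ℝ :=
  v0 0 + ∫ y in (0:ℝ)..x, uD0 N u0 y

/-- `u` solves the Lax–Friedrichs scheme (2.1) on the even grid, with initial datum
`u_m^0 = uinit(x_m)` and `2N`-periodicity. -/
def SolvesLF (N K : ℕ) (H : ℝ → ℝ → ℝ → ℝ) (c : ℝ) (uinit : ℝ → ℝ) (u : ℤ → ℕ → ℝ) : Prop :=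
  (∀ m : ℤ, Even m → u m 0 = uinit ((m : ℝ) * dx N)) ∧
  (∀ (m : ℤ) (k : ℕ), u (m + 2 * N) k = u m k) ∧
  (∀ (m : ℤ) (k : ℕ), Even (m + (k : ℤ)) →
    (u (m + 1) (k + 1) - (u m k + u (m + 2) k) / 2) / dt K
      + (H (((m : ℝ) + 2) * dx N) ((k : ℝ) * dt K) (c + u (m + 2) k)
          - H ((m : ℝ) * dx N) ((k : ℝ) * dt K) (c + u m k)) / (2 * dx N) = 0)

/-- `v` solves the Hamilton–Jacobi scheme (2.3) on the odd grid, with initial datum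
`v_{m+1}^0 = vinit(x_{m+1})` and `2N`-periodicity. -/
def SolvesHJ (N K : ℕ) (H : ℝ → ℝ → ℝ → ℝ) (c hc : ℝ) (vinit : ℝ → ℝ) (v : ℤ → ℕ → ℝ) : Prop :=
  (∀ m : ℤ, Odd m → v m 0 = vinit ((m : ℝ) * dx N)) ∧
  (∀ (m : ℤ) (k : ℕ), v (m + 2 * N) k = v m k) ∧
  (∀ (m : ℤ) (k : ℕ), Even (m + (k : ℤ)) →
    (v m (k + 1) - (v (m - 1) k + v (m + 1) k) / 2) / dt K
      + H ((m : ℝ) * dx N) ((k : ℝ) * dt K) (c + (v (m + 1) k - v (m - 1) k) / (2 * dx N)) = hc)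

/-!
Applying the central difference `D_x` to the residual `D_t v + H(x, t, c + D_x v)` of the
Hamilton–Jacobi scheme produces the residual of the Lax–Friedrichs scheme for `u = D_x v`: the
LF residual at `m` is the difference quotient of the HJ residuals at `m + 2` and `m`. Hence `D_x`
maps solutions of (2.3) to solutions of (2.1), provided `D_x v_Δ^0 = u_Δ^0` at the even nodes;
this holds because `u_Δ^0` is constant on each cell, so its integral over a cell is `2Δx` times
its value at the node. Conversely, (2.3) is explicit in time, so it can be marched from `v_Δ^0`;
since the LF residual determines the next time level, `D_x v = u` follows by induction on `k`.
The marched solution is `2N`-periodic because `v_Δ^0` is `1`-periodic, which is where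
`∫ u^0 = 0` enters.
-/

namespace LaxFriedrichsHJ

open MeasureTheory intervalIntegral Function Set

theorem dx_pos {N : ℕ} (hN : N ≠ 0) : 0 < dx N := by
  unfold dx
  positivity

theorem two_mul_N_mul_dx {N : ℕ} (hN : N ≠ 0) : 2 * (N : ℝ) * dx N = 1 := by
  unfold dx
  field_simp

theorem cast_add_two_mul_N_mul_dx {N : ℕ} (hN : N ≠ 0) (m : ℤ) :
    ((m + 2 * N : ℤ) : ℝ) * dx N = m * dx N + 1 := by
  push_cast
  linear_combination two_mul_N_mul_dx hN

section InitialData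

variable {N : ℕ} {u0 : ℝ → ℝ}

variable (N u0) in
/-- `u_Δ^0` on the cell `[(2n - 1)Δx, (2n + 1)Δx)` of the even node `x_{2n}`. -/
def cellAverage (n : ℤ) : ℝ :=
  (1 / (2 * dx N)) *
    ∫ y in (((2 * n : ℤ) : ℝ) * dx N - dx N)..(((2 * n : ℤ) : ℝ) * dx N + dx N), u0 y

theorem uD0_eq_cellAverage (hN : N ≠ 0) {n : ℤ} {x : ℝ}
    (h₁ : (2 * n - 1) * dx N ≤ x) (h₂ : x < (2 * n + 1) * dx N) :
    uD0 N u0 x = cellAverage N u0 n := by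
  have hdx := dx_pos hN
  have hcell : ⌊(x / dx N + 1) / 2⌋ = n := by
    rw [Int.floor_eq_iff]
    constructor
    · linarith [(le_div_iff₀ hdx).mpr h₁]
    · linarith [(div_lt_iff₀ hdx).mpr h₂]
  exact congrArg (cellAverage N u0) hcell

theorem uD0_eqOn_cell (hN : N ≠ 0) (n : ℤ) :
    EqOn (uD0 N u0) (fun _ => cellAverage N u0 n)
      (uIoo ((2 * n - 1) * dx N) ((2 * n + 1) * dx N)) := by
  intro x hx
  have hle : (2 * n - 1) * dx N ≤ (2 * n + 1) * dx N := by nlinarith [dx_pos hN]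
  rw [uIoo_of_le hle] at hx
  exact uD0_eq_cellAverage hN hx.1.le hx.2

theorem intervalIntegrable_uD0_cell (hN : N ≠ 0) (n : ℤ) :
    IntervalIntegrable (uD0 N u0) volume ((2 * n - 1) * dx N) ((2 * n + 1) * dx N) :=
  intervalIntegrable_const.congr_uIoo (uD0_eqOn_cell hN n).symm

theorem integral_uD0_cell (hN : N ≠ 0) (n : ℤ) :
    ∫ y in ((2 * n - 1) * dx N)..((2 * n + 1) * dx N), uD0 N u0 y
      = 2 * dx N * cellAverage N u0 n := by
  rw [integral_congr_uIoo (uD0_eqOn_cell hN n), intervalIntegral.integral_const, smul_eq_mul]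
  ring

theorem two_mul_dx_mul_cellAverage (hN : N ≠ 0) (n : ℤ) :
    2 * dx N * cellAverage N u0 n = ∫ y in ((2 * n - 1) * dx N)..((2 * n + 1) * dx N), u0 y := by
  have hdx := (dx_pos hN).ne'
  rw [cellAverage, ← mul_assoc, mul_one_div_cancel (by positivity), one_mul]
  congr 1 <;> push_cast <;> ring

theorem cellAverage_add_N (hN : N ≠ 0) (hu0 : Periodic u0 1) (n : ℤ) :
    cellAverage N u0 (n + N) = cellAverage N u0 n := by
  have hshift : ∀ s : ℝ,
      ((2 * (n + N) : ℤ) : ℝ) * dx N + s = ((2 * n : ℤ) : ℝ) * dx N + s + 1 := by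
    intro s
    push_cast
    linear_combination two_mul_N_mul_dx hN
  rw [cellAverage, cellAverage, sub_eq_add_neg, sub_eq_add_neg, hshift, hshift,
    ← integral_comp_add_right]
  simp only [hu0 _]

theorem uD0_periodic (hN : N ≠ 0) (hu0 : Periodic u0 1) : Periodic (uD0 N u0) 1 := by
  intro x
  have hindex : ((x + 1) / dx N + 1) / 2 = (x / dx N + 1) / 2 + (N : ℤ) := by
    have := two_mul_N_mul_dx hN
    have hdx := (dx_pos hN).ne'
    push_cast
    field_simp
    linear_combination -this
  change cellAverage N u0 _ = cellAverage N u0 _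
  rw [hindex, Int.floor_add_intCast, cellAverage_add_N hN hu0]

/-- The cells of the even nodes `x_0, …, x_{2N-2}` tile the period `[-Δx, 1 - Δx]`. -/
theorem cell_endpoint_N (hN : N ≠ 0) : (2 * (N : ℝ) - 1) * dx N = -dx N + 1 := by
  linear_combination two_mul_N_mul_dx hN

theorem intervalIntegrable_uD0 (hN : N ≠ 0) (hu0 : Periodic u0 1) (a b : ℝ) :
    IntervalIntegrable (uD0 N u0) volume a b := by
  refine (uD0_periodic hN hu0).intervalIntegrable one_ne_zero (t := -dx N) ?_ a b
  have hcells := IntervalIntegrable.trans_iterate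
    (a := fun i : ℕ => (2 * ((i : ℤ) : ℝ) - 1) * dx N) (n := N) fun i _ => by
      convert intervalIntegrable_uD0_cell (u0 := u0) hN i using 2
      push_cast
      ring
  simpa [cell_endpoint_N hN] using hcells

theorem integral_uD0_period (hN : N ≠ 0) (hu0_int : ∀ a b, IntervalIntegrable u0 volume a b)
    (hu0 : Periodic u0 1) (hu0_mean : ∫ y in (0 : ℝ)..1, u0 y = 0) (t : ℝ) :
    ∫ y in t..t + 1, uD0 N u0 y = 0 := by
  set e : ℕ → ℝ := fun i => (2 * ((i : ℤ) : ℝ) - 1) * dx N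
  have he : ∀ i : ℕ, e (i + 1) = (2 * ((i : ℤ) : ℝ) + 1) * dx N := fun i => by
    simp only [e]; push_cast; ring
  have hcell : ∀ i ∈ Finset.range N,
      ∫ y in e i..e (i + 1), uD0 N u0 y = ∫ y in e i..e (i + 1), u0 y :=
    fun i _ => by rw [he, integral_uD0_cell hN, two_mul_dx_mul_cellAverage hN]
  have hsum := Finset.sum_congr rfl hcell
  rw [sum_integral_adjacent_intervals fun i _ => intervalIntegrable_uD0 hN hu0 _ _,
    sum_integral_adjacent_intervals fun i _ => hu0_int _ _] at hsum
  have he0 : e 0 = -dx N := by simp [e]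
  rw [he0, show e N = -dx N + 1 by simp [e, cell_endpoint_N hN]] at hsum
  rw [(uD0_periodic hN hu0).intervalIntegral_add_eq t (-dx N), hsum,
    hu0.intervalIntegral_add_eq (-dx N) 0, zero_add, hu0_mean]

theorem vD0_sub_vD0 (hN : N ≠ 0) (hu0 : Periodic u0 1) (v0 : ℝ → ℝ) (a b : ℝ) :
    vD0 N u0 v0 b - vD0 N u0 v0 a = ∫ y in a..b, uD0 N u0 y := by
  rw [vD0, vD0, add_sub_add_left_eq_sub,
    integral_interval_sub_left (intervalIntegrable_uD0 hN hu0 _ _)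
      (intervalIntegrable_uD0 hN hu0 _ _)]

theorem vD0_periodic (hN : N ≠ 0) (hu0_int : ∀ a b, IntervalIntegrable u0 volume a b)
    (hu0 : Periodic u0 1) (hu0_mean : ∫ y in (0 : ℝ)..1, u0 y = 0) (v0 : ℝ → ℝ) :
    Periodic (vD0 N u0 v0) 1 := fun x => by
  rw [← sub_eq_zero, vD0_sub_vD0 hN hu0, integral_uD0_period hN hu0_int hu0 hu0_mean]

theorem vD0_centralDiff (hN : N ≠ 0) (hu0 : Periodic u0 1) (v0 : ℝ → ℝ) {m : ℤ}
    (hm : Even m) :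
    (vD0 N u0 v0 ((m + 1) * dx N) - vD0 N u0 v0 ((m - 1) * dx N)) / (2 * dx N)
      = uD0 N u0 (m * dx N) := by
  obtain ⟨n, rfl⟩ := hm
  have hdx := dx_pos hN
  have hcast : ((n + n : ℤ) : ℝ) = 2 * n := by push_cast; ring
  rw [vD0_sub_vD0 hN hu0, hcast, integral_uD0_cell hN,
    uD0_eq_cellAverage hN (by nlinarith) (by nlinarith)]
  field_simp

end InitialData

section Schemes

variable (N K : ℕ) (H : ℝ → ℝ → ℝ → ℝ) (c : ℝ)

def centralDiff (v : ℤ → ℕ → ℝ) (m : ℤ) (k : ℕ) : ℝ :=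
  (v (m + 1) k - v (m - 1) k) / (2 * dx N)

def lfResidual (u : ℤ → ℕ → ℝ) (m : ℤ) (k : ℕ) : ℝ :=
  (u (m + 1) (k + 1) - (u m k + u (m + 2) k) / 2) / dt K
    + (H (((m : ℝ) + 2) * dx N) ((k : ℝ) * dt K) (c + u (m + 2) k)
        - H ((m : ℝ) * dx N) ((k : ℝ) * dt K) (c + u m k)) / (2 * dx N)

def hjResidual (v : ℤ → ℕ → ℝ) (m : ℤ) (k : ℕ) : ℝ :=
  (v m (k + 1) - (v (m - 1) k + v (m + 1) k) / 2) / dt K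
    + H ((m : ℝ) * dx N) ((k : ℝ) * dt K) (c + centralDiff N v m k)

/-- Discrete form of `∂ₓ (v_t + H(x, t, c + v_x)) = u_t + (H(x, t, c + u))_x` for `u = v_x`. -/
theorem lfResidual_centralDiff (v : ℤ → ℕ → ℝ) (m : ℤ) (k : ℕ) :
    lfResidual N K H c (centralDiff N v) m k
      = (hjResidual N K H c v (m + 2) k - hjResidual N K H c v m k) / (2 * dx N) := by
  simp only [lfResidual, hjResidual, centralDiff]
  rw [show m + 1 + 1 = m + 2 by ring, show m + 1 - 1 = m by ring, show m + 2 + 1 = m + 3 by ring,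
    show m + 2 - 1 = m + 1 by ring]
  push_cast
  ring

theorem eq_of_lfResidual_eq (hdt : dt K ≠ 0) {u u' : ℤ → ℕ → ℝ} {m : ℤ} {k : ℕ}
    (hm : u m k = u' m k) (hm2 : u (m + 2) k = u' (m + 2) k)
    (h : lfResidual N K H c u m k = lfResidual N K H c u' m k) :
    u (m + 1) (k + 1) = u' (m + 1) (k + 1) := by
  simp only [lfResidual, hm, hm2, add_left_inj] at h
  rwa [div_left_inj' hdt, sub_left_inj] at h

variable {N K H c}

theorem _root_.SolvesHJ.solvesLF_centralDiff {hc : ℝ} {vinit uinit : ℝ → ℝ}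
    {v : ℤ → ℕ → ℝ} (hv : SolvesHJ N K H c hc vinit v)
    (hinit : ∀ m : ℤ, Even m →
      (vinit (((m : ℝ) + 1) * dx N) - vinit (((m : ℝ) - 1) * dx N)) / (2 * dx N)
        = uinit ((m : ℝ) * dx N)) :
    SolvesLF N K H c uinit (centralDiff N v) := by
  obtain ⟨hv_init, hv_per, hv_eq⟩ := hv
  refine ⟨fun m hm => ?_, fun m k => ?_, fun m k hmk => ?_⟩
  · rw [centralDiff, hv_init _ hm.add_one, hv_init _ (hm.sub_odd odd_one), ← hinit m hm]
    push_cast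
    rfl
  · simp only [centralDiff, show m + 2 * (N : ℤ) + 1 = m + 1 + 2 * N by ring,
      show m + 2 * (N : ℤ) - 1 = m - 1 + 2 * N by ring, hv_per]
  · have hmk2 : Even (m + 2 + k) := by simpa [add_right_comm] using hmk.add even_two
    have h := lfResidual_centralDiff N K H c v m k
    rw [show hjResidual N K H c v (m + 2) k = hc from hv_eq _ _ hmk2,
      show hjResidual N K H c v m k = hc from hv_eq _ _ hmk, sub_self, zero_div] at h
    exact h

end Schemes

section Marching

variable (N K : ℕ) (H : ℝ → ℝ → ℝ → ℝ) (c hc : ℝ)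

/-- The scheme (2.3) solved for `v_m^{k+1}` and marched at every `m`, not only on the odd grid. -/
def hjSolution (vinit : ℝ → ℝ) : ℤ → ℕ → ℝ
  | m, 0 => vinit ((m : ℝ) * dx N)
  | m, k + 1 => (hjSolution vinit (m - 1) k + hjSolution vinit (m + 1) k) / 2
      + dt K * (hc - H ((m : ℝ) * dx N) ((k : ℝ) * dt K)
          (c + (hjSolution vinit (m + 1) k - hjSolution vinit (m - 1) k) / (2 * dx N)))

variable {N K H c hc}

theorem hjResidual_hjSolution (hdt : dt K ≠ 0) (vinit : ℝ → ℝ) (m : ℤ) (k : ℕ) :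
    hjResidual N K H c (hjSolution N K H c hc vinit) m k = hc := by
  rw [hjResidual, hjSolution.eq_2, centralDiff]
  field_simp
  ring

theorem hjSolution_add_two_mul_N (hN : N ≠ 0) {vinit : ℝ → ℝ} (hvinit : Periodic vinit 1)
    (hH : ∀ x t p, H (x + 1) t p = H x t p) (k : ℕ) (m : ℤ) :
    hjSolution N K H c hc vinit (m + 2 * N) k = hjSolution N K H c hc vinit m k := by
  induction k generalizing m with
  | zero => rw [hjSolution.eq_1, hjSolution.eq_1, cast_add_two_mul_N_mul_dx hN, hvinit]
  | succ k ih =>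
    rw [hjSolution.eq_2, hjSolution.eq_2, cast_add_two_mul_N_mul_dx hN, hH,
      show m + 2 * (N : ℤ) + 1 = m + 1 + 2 * N by ring,
      show m + 2 * (N : ℤ) - 1 = m - 1 + 2 * N by ring, ih, ih]

theorem solvesHJ_hjSolution (hN : N ≠ 0) (hdt : dt K ≠ 0) {vinit : ℝ → ℝ}
    (hvinit : Periodic vinit 1) (hH : ∀ x t p, H (x + 1) t p = H x t p) :
    SolvesHJ N K H c hc vinit (hjSolution N K H c hc vinit) :=
  ⟨fun _ _ => rfl, fun m k => hjSolution_add_two_mul_N hN hvinit hH k m,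
    fun m k _ => hjResidual_hjSolution hdt vinit m k⟩

theorem centralDiff_hjSolution (hdt : dt K ≠ 0) {vinit uinit : ℝ → ℝ}
    {u : ℤ → ℕ → ℝ} (hu : SolvesLF N K H c uinit u)
    (hinit : ∀ m : ℤ, Even m →
      (vinit (((m : ℝ) + 1) * dx N) - vinit (((m : ℝ) - 1) * dx N)) / (2 * dx N)
        = uinit ((m : ℝ) * dx N))
    (k : ℕ) (m : ℤ) (hmk : Even (m + k)) :
    centralDiff N (hjSolution N K H c hc vinit) m k = u m k := by
  induction k generalizing m with
  | zero =>
    rw [Nat.cast_zero, add_zero] at hmk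
    rw [centralDiff, hjSolution.eq_1, hjSolution.eq_1, hu.1 m hmk, ← hinit m hmk]
    push_cast
    rfl
  | succ k ih =>
    obtain ⟨j, rfl⟩ : ∃ j, m = j + 1 := ⟨m - 1, by ring⟩
    have hjk : Even (j + k) := by
      obtain ⟨r, hr⟩ := hmk
      exact ⟨r - 1, by push_cast at hr; omega⟩
    have hjk2 : Even (j + 2 + k) := by simpa [add_right_comm] using hjk.add even_two
    refine eq_of_lfResidual_eq N K H c hdt (ih j hjk) (ih (j + 2) hjk2) ?_
    rw [lfResidual_centralDiff, hjResidual_hjSolution hdt, hjResidual_hjSolution hdt, sub_self,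
      zero_div]
    exact (hu.2.2 j k hjk).symm

end Marching

end LaxFriedrichsHJ

open LaxFriedrichsHJ

theorem lax_friedrichs_hamilton_jacobi_equivalence_general
    (N K : ℕ) (hN : 0 < N) (hK : 0 < K)
    (H : ℝ → ℝ → ℝ → ℝ)
    (hH_perx : ∀ x t p, H (x + 1) t p = H x t p)
    (c : ℝ) (hFun : ℝ → ℝ)
    (u0 v0 : ℝ → ℝ)
    (hu0_int : ∀ a b : ℝ, IntervalIntegrable u0 MeasureTheory.volume a b)
    (hu0_per : ∀ y, u0 (y + 1) = u0 y)
    (hu0_mean : (∫ y in (0:ℝ)..1, u0 y) = 0) :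
    (∀ v : ℤ → ℕ → ℝ, SolvesHJ N K H c (hFun c) (vD0 N u0 v0) v →
        SolvesLF N K H c (uD0 N u0)
          (fun m k => (v (m + 1) k - v (m - 1) k) / (2 * dx N))) ∧
    (∀ u : ℤ → ℕ → ℝ, SolvesLF N K H c (uD0 N u0) u →
        ∃ v : ℤ → ℕ → ℝ, SolvesHJ N K H c (hFun c) (vD0 N u0 v0) v ∧
          ∀ (m : ℤ) (k : ℕ), Even (m + (k : ℤ)) →
            (v (m + 1) k - v (m - 1) k) / (2 * dx N) = u m k) := by
  have hdt : dt K ≠ 0 := one_div_ne_zero (mul_ne_zero two_ne_zero (Nat.cast_ne_zero.mpr hK.ne'))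
  have hinit : ∀ m : ℤ, Even m →
      (vD0 N u0 v0 ((m + 1) * dx N) - vD0 N u0 v0 ((m - 1) * dx N)) / (2 * dx N)
        = uD0 N u0 (m * dx N) :=
    fun m hm => vD0_centralDiff hN.ne' hu0_per v0 hm
  refine ⟨fun v hv => hv.solvesLF_centralDiff hinit, fun u hu => ?_⟩
  exact ⟨hjSolution N K H c (hFun c) (vD0 N u0 v0),
    solvesHJ_hjSolution hN.ne' hdt (vD0_periodic hN.ne' hu0_int hu0_per hu0_mean v0) hH_perx,
    fun m k hmk => centralDiff_hjSolution hdt hu hinit k m hmk⟩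

/-- Proposition 2.1: with initial data related by (2.2) and (2.4), the
Lax–Friedrichs scheme (2.1) and the Hamilton–Jacobi scheme (2.3) are equivalent: from a
solution `v` of (2.3) the function `D_x v_{m+1}^k` solves (2.1); conversely every solution
`u` of (2.1) arises as `D_x v_{m+1}^k` for some solution `v` of (2.3). -/
theorem lax_friedrichs_hamilton_jacobi_equivalence
    (N K : ℕ) (hN : 0 < N) (hK : 0 < K)
    (H : ℝ → ℝ → ℝ → ℝ)
    (hH_C2 : ContDiff ℝ 2 (fun q : ℝ × ℝ × ℝ => H q.1 q.2.1 q.2.2))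
    (hH_perx : ∀ x t p, H (x + 1) t p = H x t p)
    (hH_pert : ∀ x t p, H x (t + 1) p = H x t p)
    (c0 c1 c : ℝ) (hc : c ∈ Set.Icc c0 c1) (hFun : ℝ → ℝ)
    (u0 v0 : ℝ → ℝ)
    (hu0_int : ∀ a b : ℝ, IntervalIntegrable u0 MeasureTheory.volume a b)
    (hu0_per : ∀ y, u0 (y + 1) = u0 y)
    (hu0_mean : (∫ y in (0:ℝ)..1, u0 y) = 0)
    (hv0_lip : ∃ C : NNReal, LipschitzWith C v0)
    (hv0_per : ∀ y, v0 (y + 1) = v0 y)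
    (hv0_deriv : ∀ x, v0 x = v0 0 + ∫ y in (0:ℝ)..x, u0 y) :
    (∀ v : ℤ → ℕ → ℝ, SolvesHJ N K H c (hFun c) (vD0 N u0 v0) v →
        SolvesLF N K H c (uD0 N u0)
          (fun m k => (v (m + 1) k - v (m - 1) k) / (2 * dx N))) ∧
    (∀ u : ℤ → ℕ → ℝ, SolvesLF N K H c (uD0 N u0) u →
        ∃ v : ℤ → ℕ → ℝ, SolvesHJ N K H c (hFun c) (vD0 N u0 v0) v ∧
          ∀ (m : ℤ) (k : ℕ), Even (m + (k : ℤ)) →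
            (v (m + 1) k - v (m - 1) k) / (2 * dx N) = u m k) :=
  lax_friedrichs_hamilton_jacobi_equivalence_general N K hN hK H hH_perx c hFun u0 v0 hu0_int
    hu0_per hu0_mean
end
end

section
/- For any velocity field ξ, define η^{l+1}(γ) := γ^{l+1} and η^k(γ) := γ^{l+1} − Σ_{k<k'≤l+1} ξ(γ^{k'}, t_{k'})Δt for 0 ≤ k ≤ l. Set σ̃^k := E_{μ(·;ξ)}[|γ^k − η^k(γ)|²] and d̃^k := E_{μ(·;ξ)}[|γ^k − η^k(γ)|]. Then for all 0 ≤ k ≤ l+1: (d̃^k)² ≤ σ̃^k ≤ ((t_{l+1} − t_k)/λ)·Δx. -/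
/-!
Write `D^k = γ^k - η^k`. Splitting off the first backward step, from `(x_n, t_{l+1})` to
`x_{n ± 1}`, gives `D^k = D'^k + (±1 + λξ(x_n, t_{l+1}))Δx`, where `D'` is the deviation of the
remaining walk. Under the probabilities `(1 ∓ λξ)/2` the increment has mean `0` and second moment
`(1 - (λξ)²)Δx² ≤ Δx²`, so by induction on the length of the walk `D^k` has mean zero and
`σ̃^k ≤ (l + 1 - k)Δx² = ((t_{l+1} - t_k)/λ)Δx`. The first inequality is Jensen's.
-/
open scoped BigOperators Classical

noncomputable section

/-- Hyperbolic ratio `λ = Δt/Δx`. -/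
def lam (N K : ℕ) : ℝ := dt K / dx N

/-- Position (in units of `Δx`, i.e. the integer index `m`) at time step `k` of the backward
random walk starting at `x_n` at time `t_{l+1}`, whose step from time `j+1` down to time `j`
is `+Δx` if `s j = true` and `-Δx` otherwise. -/
def pos (n : ℤ) (l : ℕ) (s : Fin (l + 1) → Bool) (k : ℕ) : ℤ :=
  n + ∑ j : Fin (l + 1), if k ≤ (j : ℕ) then (if s j then 1 else -1) else 0

/-- The probability density `μ(γ;ξ)` of the path encoded by `s`: the product over all backward
steps of the transition probability `1/2 - (λ/2)ξ` (step `+Δx`) or `1/2 + (λ/2)ξ` (step `-Δx`),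
where `ξ` is evaluated at the grid point `(γ^{j+1}, t_{j+1})` from which the step is taken. -/
def walkMeasure (N K : ℕ) (n : ℤ) (l : ℕ) (ξ : ℤ → ℕ → ℝ) (s : Fin (l + 1) → Bool) : ℝ :=
  ∏ j : Fin (l + 1),
    (if s j then 1 / 2 - lam N K / 2 * ξ (pos n l s ((j : ℕ) + 1)) ((j : ℕ) + 1)
     else 1 / 2 + lam N K / 2 * ξ (pos n l s ((j : ℕ) + 1)) ((j : ℕ) + 1))

/-- `p_m^k`: the total mass of paths sitting at `x_m` at time `t_k`. -/
def pmass (N K : ℕ) (n : ℤ) (l : ℕ) (ξ : ℤ → ℕ → ℝ) (m : ℤ) (k : ℕ) : ℝ :=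
  ∑ s : Fin (l + 1) → Bool, if pos n l s k = m then walkMeasure N K n l ξ s else 0


/-- The deterministic process `η^k(γ) = γ^{l+1} - Σ_{k<k'≤l+1} ξ(γ^{k'}, t_{k'})Δt`
induced by the walk `γ` (encoded by `s`) and the velocity field `ξ`. -/
def eta (N K : ℕ) (n : ℤ) (l : ℕ) (ξ : ℤ → ℕ → ℝ) (s : Fin (l + 1) → Bool) (k : ℕ) : ℝ :=
  (n : ℝ) * dx N -
    ∑ j : Fin (l + 1),
      (if k ≤ (j : ℕ) then ξ (pos n l s ((j : ℕ) + 1)) ((j : ℕ) + 1) * dt K else 0)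

theorem sum_pi_fin_succ_eq_sum_snoc {α M : Type*} [Fintype α] [AddCommMonoid M] {m : ℕ}
    (f : (Fin (m + 1) → α) → M) :
    ∑ s : Fin (m + 1) → α, f s = ∑ a : α, ∑ s : Fin m → α, f (Fin.snoc s a) := by
  rw [← (Fin.snocEquiv fun _ => α).sum_comp, Fintype.sum_prod_type]
  rfl

theorem sq_sum_mul_le_sum_mul_sq {ι : Type*} (t : Finset ι) (w f : ι → ℝ)
    (hw : ∀ i ∈ t, 0 ≤ w i) (hw₁ : ∑ i ∈ t, w i = 1) :
    (∑ i ∈ t, w i * f i) ^ 2 ≤ ∑ i ∈ t, w i * f i ^ 2 :=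
  (even_two.convexOn_pow (𝕜 := ℝ)).map_sum_le hw hw₁ fun _ _ => Set.mem_univ _

def stepSign (b : Bool) : ℤ := if b then 1 else -1

/- `pos`, `walkMeasure` and `eta` are definitionally the case `m = l + 1` of the following
versions for walks of any length `m`, which admit induction on the length. -/
def walkPos (n : ℤ) {m : ℕ} (s : Fin m → Bool) (k : ℕ) : ℤ :=
  n + ∑ j : Fin m, if k ≤ (j : ℕ) then stepSign (s j) else 0

def stepProb (N K : ℕ) (v : ℝ) (b : Bool) : ℝ :=
  if b then 1 / 2 - lam N K / 2 * v else 1 / 2 + lam N K / 2 * v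

def walkWeight (N K : ℕ) (n : ℤ) (ξ : ℤ → ℕ → ℝ) {m : ℕ} (s : Fin m → Bool) : ℝ :=
  ∏ j : Fin m, stepProb N K (ξ (walkPos n s ((j : ℕ) + 1)) ((j : ℕ) + 1)) (s j)

def walkDrift (N K : ℕ) (n : ℤ) (ξ : ℤ → ℕ → ℝ) {m : ℕ} (s : Fin m → Bool) (k : ℕ) : ℝ :=
  (n : ℝ) * dx N -
    ∑ j : Fin m, (if k ≤ (j : ℕ) then ξ (walkPos n s ((j : ℕ) + 1)) ((j : ℕ) + 1) * dt K else 0)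

def walkDeviation (N K : ℕ) (n : ℤ) (ξ : ℤ → ℕ → ℝ) {m : ℕ} (s : Fin m → Bool) (k : ℕ) : ℝ :=
  (walkPos n s k : ℝ) * dx N - walkDrift N K n ξ s k

theorem walkMeasure_eq_walkWeight (N K : ℕ) (n : ℤ) (l : ℕ) (ξ : ℤ → ℕ → ℝ) :
    walkMeasure N K n l ξ = walkWeight N K n ξ := rfl

theorem pos_mul_dx_sub_eta (N K : ℕ) (n : ℤ) (l : ℕ) (ξ : ℤ → ℕ → ℝ) (s : Fin (l + 1) → Bool)
    (k : ℕ) : (pos n l s k : ℝ) * dx N - eta N K n l ξ s k = walkDeviation N K n ξ s k := rfl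

theorem lam_nonneg (N K : ℕ) : 0 ≤ lam N K := by
  unfold lam dt dx
  positivity

theorem abs_lam_mul_le_one {N K : ℕ} {v : ℝ} (hv : |v| ≤ (lam N K)⁻¹) : |lam N K * v| ≤ 1 := by
  rw [abs_mul, abs_of_nonneg (lam_nonneg N K)]
  exact (mul_le_mul_of_nonneg_left hv (lam_nonneg N K)).trans mul_inv_le_one

theorem dt_eq_lam_mul_dx (N K : ℕ) (hN : 0 < N) : dt K = lam N K * dx N := by
  have : dx N ≠ 0 := by unfold dx; positivity
  rw [lam, div_mul_cancel₀ _ this]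

section Snoc

variable (N K : ℕ) (n : ℤ) (ξ : ℤ → ℕ → ℝ) {m : ℕ} (s : Fin m → Bool) (b : Bool)

theorem walkPos_of_le {k : ℕ} (hk : m ≤ k) : walkPos n s k = n := by
  rw [walkPos, Finset.sum_eq_zero fun j _ => if_neg (by omega), add_zero]

theorem walkPos_snoc {k : ℕ} (hk : k ≤ m) :
    walkPos n (Fin.snoc s b : Fin (m + 1) → Bool) k = walkPos (n + stepSign b) s k := by
  simp only [walkPos, Fin.sum_univ_castSucc, Fin.snoc_castSucc, Fin.snoc_last, Fin.val_castSucc,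
    Fin.val_last, if_pos hk]
  ring

/- `Fin.snoc s b` puts `b` at the last index `m`: it is the first step of the walk, taken from
`(x_n, t_{m+1})`; the remaining steps `s` form a walk of length `m` started from `x_{n ± 1}`. -/
theorem walkWeight_snoc :
    walkWeight N K n ξ (Fin.snoc s b : Fin (m + 1) → Bool)
      = stepProb N K (ξ n (m + 1)) b * walkWeight N K (n + stepSign b) ξ s := by
  simp only [walkWeight, Fin.prod_univ_castSucc, Fin.snoc_castSucc, Fin.snoc_last,
    Fin.val_castSucc, Fin.val_last, walkPos_of_le n _ le_rfl,
    fun j : Fin m => walkPos_snoc n s b (Nat.succ_le_of_lt j.isLt)]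
  ring

theorem walkDrift_snoc {k : ℕ} (hk : k ≤ m) :
    walkDrift N K n ξ (Fin.snoc s b : Fin (m + 1) → Bool) k
      = walkDrift N K (n + stepSign b) ξ s k - stepSign b * dx N - ξ n (m + 1) * dt K := by
  simp only [walkDrift, Fin.sum_univ_castSucc,
    Fin.val_castSucc, Fin.val_last, walkPos_of_le n _ le_rfl, if_pos hk,
    fun j : Fin m => walkPos_snoc n s b (Nat.succ_le_of_lt j.isLt)]
  push_cast
  ring

theorem walkDeviation_of_le {k : ℕ} (hk : m ≤ k) : walkDeviation N K n ξ s k = 0 := by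
  simp only [walkDeviation, walkDrift, walkPos_of_le n s hk,
    Finset.sum_eq_zero fun (j : Fin m) _ => if_neg (show ¬k ≤ j by omega), sub_zero, sub_self]

theorem walkDeviation_snoc (hN : 0 < N) {k : ℕ} (hk : k ≤ m) :
    walkDeviation N K n ξ (Fin.snoc s b : Fin (m + 1) → Bool) k
      = walkDeviation N K (n + stepSign b) ξ s k
        + (stepSign b + lam N K * ξ n (m + 1)) * dx N := by
  rw [walkDeviation, walkDeviation, walkPos_snoc n s b hk, walkDrift_snoc N K n ξ s b hk,
    dt_eq_lam_mul_dx N K hN]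
  ring

end Snoc

section StepProb

variable (N K : ℕ) (v : ℝ)

theorem stepProb_nonneg (hv : |lam N K * v| ≤ 1) (b : Bool) : 0 ≤ stepProb N K v b := by
  have := abs_le.mp hv
  cases b <;> simp only [stepProb, Bool.false_eq_true, ↓reduceIte] <;> linarith

theorem sum_stepProb : ∑ b, stepProb N K v b = 1 := by
  simp only [Fintype.sum_bool, stepProb, Bool.false_eq_true, ↓reduceIte]
  ring

theorem sum_stepProb_mul_increment :
    ∑ b, stepProb N K v b * (stepSign b + lam N K * v) = 0 := by
  simp only [Fintype.sum_bool, stepProb, stepSign, Bool.false_eq_true, ↓reduceIte]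
  push_cast
  ring

theorem sum_stepProb_mul_increment_sq :
    ∑ b, stepProb N K v b * (stepSign b + lam N K * v) ^ 2 = 1 - (lam N K * v) ^ 2 := by
  simp only [Fintype.sum_bool, stepProb, stepSign, Bool.false_eq_true, ↓reduceIte]
  push_cast
  ring

end StepProb

section Moments

variable (N K : ℕ) (ξ : ℤ → ℕ → ℝ)

theorem walkWeight_nonneg (hξ : ∀ x t, |lam N K * ξ x t| ≤ 1) (n : ℤ) {m : ℕ}
    (s : Fin m → Bool) : 0 ≤ walkWeight N K n ξ s :=
  Finset.prod_nonneg fun j _ => stepProb_nonneg N K _ (hξ _ _) (s j)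

theorem sum_walkWeight (m : ℕ) (n : ℤ) : ∑ s : Fin m → Bool, walkWeight N K n ξ s = 1 := by
  induction m generalizing n with
  | zero => simp [walkWeight]
  | succ m ih =>
    simp only [sum_pi_fin_succ_eq_sum_snoc, walkWeight_snoc, ← Finset.mul_sum, ih, mul_one,
      sum_stepProb]

theorem sum_walkWeight_mul_walkDeviation (hN : 0 < N) (m : ℕ) (n : ℤ) (k : ℕ) :
    ∑ s : Fin m → Bool, walkWeight N K n ξ s * walkDeviation N K n ξ s k = 0 := by
  induction m generalizing n with
  | zero => simp [walkDeviation_of_le]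
  | succ m ih =>
    rcases le_or_gt k m with hk | hk
    · calc _ = ∑ b, stepProb N K (ξ n (m + 1)) b * ∑ s : Fin m → Bool,
              walkWeight N K (n + stepSign b) ξ s * (walkDeviation N K (n + stepSign b) ξ s k
                + (stepSign b + lam N K * ξ n (m + 1)) * dx N) := by
            simp only [sum_pi_fin_succ_eq_sum_snoc, walkWeight_snoc,
              walkDeviation_snoc N K _ ξ _ _ hN hk, mul_assoc, ← Finset.mul_sum]
        _ = ∑ b, stepProb N K (ξ n (m + 1)) b * ((stepSign b + lam N K * ξ n (m + 1)) * dx N) := by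
            simp only [mul_add, Finset.sum_add_distrib, ← Finset.sum_mul, ih, sum_walkWeight,
              zero_add, one_mul]
        _ = 0 := by
            simp only [← mul_assoc, ← Finset.sum_mul, sum_stepProb_mul_increment, zero_mul]
    · simp [walkDeviation_of_le N K n ξ _ hk]

theorem sum_walkWeight_mul_walkDeviation_add_sq (hN : 0 < N) {m : ℕ} (n : ℤ) (k : ℕ) (c : ℝ) :
    ∑ s : Fin m → Bool, walkWeight N K n ξ s * (walkDeviation N K n ξ s k + c) ^ 2
      = ∑ s : Fin m → Bool, walkWeight N K n ξ s * walkDeviation N K n ξ s k ^ 2 + c ^ 2 := by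
  have hmean := sum_walkWeight_mul_walkDeviation N K ξ hN m n k
  have hmass := sum_walkWeight N K ξ m n
  calc _ = ∑ s : Fin m → Bool, walkWeight N K n ξ s * walkDeviation N K n ξ s k ^ 2
          + 2 * c * ∑ s : Fin m → Bool, walkWeight N K n ξ s * walkDeviation N K n ξ s k
          + c ^ 2 * ∑ s : Fin m → Bool, walkWeight N K n ξ s := by
        simp only [Finset.mul_sum, ← Finset.sum_add_distrib]
        exact Finset.sum_congr rfl fun s _ => by ring
    _ = _ := by rw [hmean, hmass]; ring

theorem sum_walkWeight_mul_walkDeviation_sq_le (hN : 0 < N)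
    (hξ : ∀ x t, |lam N K * ξ x t| ≤ 1) (m : ℕ) (n : ℤ) (k : ℕ) :
    ∑ s : Fin m → Bool, walkWeight N K n ξ s * walkDeviation N K n ξ s k ^ 2
      ≤ ((m - k : ℕ) : ℝ) * dx N ^ 2 := by
  induction m generalizing n with
  | zero => simp [walkDeviation_of_le]
  | succ m ih =>
    rcases le_or_gt k m with hk | hk
    · set p := stepProb N K (ξ n (m + 1))
      set c := fun b => stepSign b + lam N K * ξ n (m + 1)
      calc _ = ∑ b, p b * ∑ s : Fin m → Bool, walkWeight N K (n + stepSign b) ξ s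
              * (walkDeviation N K (n + stepSign b) ξ s k + c b * dx N) ^ 2 := by
            simp only [sum_pi_fin_succ_eq_sum_snoc, walkWeight_snoc,
              walkDeviation_snoc N K _ ξ _ _ hN hk, mul_assoc, ← Finset.mul_sum]
            rfl
        _ ≤ ∑ b, p b * (((m - k : ℕ) : ℝ) * dx N ^ 2 + (c b * dx N) ^ 2) := by
            gcongr with b
            · exact stepProb_nonneg N K _ (hξ _ _) b
            rw [sum_walkWeight_mul_walkDeviation_add_sq N K ξ hN]
            gcongr
            exact ih _
        _ = ((m - k : ℕ) : ℝ) * dx N ^ 2 * ∑ b, p b + dx N ^ 2 * ∑ b, p b * c b ^ 2 := by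
            simp only [Finset.mul_sum, ← Finset.sum_add_distrib]
            exact Finset.sum_congr rfl fun b _ => by ring
        _ ≤ ((m + 1 - k : ℕ) : ℝ) * dx N ^ 2 := by
            rw [sum_stepProb, sum_stepProb_mul_increment_sq, Nat.sub_add_comm hk]
            push_cast
            nlinarith [sq_nonneg (lam N K * ξ n (m + 1)), sq_nonneg (dx N)]
    · simp only [walkDeviation_of_le N K n ξ _ hk, zero_pow two_ne_zero, mul_zero,
        Finset.sum_const_zero]
      positivity

end Moments

theorem walk_variance_hyperbolic_scaling_general
    (N K : ℕ) (hN : 0 < N) (hK : 0 < K) (n : ℤ) (l : ℕ)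
    (ξ : ℤ → ℕ → ℝ) (hξ : ∀ m k, |ξ m k| ≤ (lam N K)⁻¹)
    (k : ℕ) (hk : k ≤ l + 1) :
    (∑ s : Fin (l + 1) → Bool,
        walkMeasure N K n l ξ s * |((pos n l s k : ℝ) * dx N) - eta N K n l ξ s k|) ^ 2
      ≤ (∑ s : Fin (l + 1) → Bool,
          walkMeasure N K n l ξ s * (((pos n l s k : ℝ) * dx N) - eta N K n l ξ s k) ^ 2) ∧
    (∑ s : Fin (l + 1) → Bool,
        walkMeasure N K n l ξ s * (((pos n l s k : ℝ) * dx N) - eta N K n l ξ s k) ^ 2)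
      ≤ (((l : ℝ) + 1) * dt K - (k : ℝ) * dt K) / lam N K * dx N := by
  have hlamξ : ∀ x t, |lam N K * ξ x t| ≤ 1 := fun x t => abs_lam_mul_le_one (hξ x t)
  simp only [walkMeasure_eq_walkWeight, pos_mul_dx_sub_eta]
  constructor
  · simpa only [sq_abs] using sq_sum_mul_le_sum_mul_sq Finset.univ (walkWeight N K n ξ)
      (fun s => |walkDeviation N K n ξ s k|) (fun s _ => walkWeight_nonneg N K ξ hlamξ n s)
      (sum_walkWeight N K ξ (l + 1) n)
  · have hdt : dt K ≠ 0 := by unfold dt; positivity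
    have hdx : dx N ≠ 0 := by unfold dx; positivity
    calc _ ≤ ((l + 1 - k : ℕ) : ℝ) * dx N ^ 2 :=
          sum_walkWeight_mul_walkDeviation_sq_le N K ξ hN hlamξ (l + 1) n k
      _ = _ := by
          rw [Nat.cast_sub hk, lam]
          field_simp
          push_cast
          ring

/-- Lemma 3.3: with `σ̃^k = E[|γ^k - η^k(γ)|²]` and `d̃^k = E[|γ^k - η^k(γ)|]`,
one has `(d̃^k)² ≤ σ̃^k ≤ ((t_{l+1} - t_k)/λ)·Δx` for all `0 ≤ k ≤ l+1`. -/
theorem walk_variance_hyperbolic_scaling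
    (N K : ℕ) (hN : 0 < N) (hK : 0 < K) (n : ℤ) (l : ℕ)
    (hodd : Odd (n + (l : ℤ) + 1))
    (ξ : ℤ → ℕ → ℝ) (hξ : ∀ m k, |ξ m k| ≤ (lam N K)⁻¹)
    (k : ℕ) (hk : k ≤ l + 1) :
    (∑ s : Fin (l + 1) → Bool,
        walkMeasure N K n l ξ s * |((pos n l s k : ℝ) * dx N) - eta N K n l ξ s k|) ^ 2
      ≤ (∑ s : Fin (l + 1) → Bool,
          walkMeasure N K n l ξ s * (((pos n l s k : ℝ) * dx N) - eta N K n l ξ s k) ^ 2) ∧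
    (∑ s : Fin (l + 1) → Bool,
        walkMeasure N K n l ξ s * (((pos n l s k : ℝ) * dx N) - eta N K n l ξ s k) ^ 2)
      ≤ (((l : ℝ) + 1) * dt K - (k : ℝ) * dt K) / lam N K * dx N :=
  walk_variance_hyperbolic_scaling_general N K hN hK n l ξ hξ k hk
end
end

section
/- Let t > 0 and let f : [0,t] → ℝ be a Lipschitz function with Lipschitz constant θ satisfying f(t) = 0. Then sup_{s∈[0,t]} |f(s)| ≤ θ·‖f‖_{L²([0,t])} + √(‖f‖_{L²([0,t])}). -/
noncomputable section

/-- Lemma 3.5: a Lipschitz function on `[0,t]` with constant `θ` vanishing at `t`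
satisfies `sup |f| ≤ θ‖f‖_{L²} + √‖f‖_{L²}`, where `‖f‖_{L²([0,t])} = √(∫_0^t |f|²)`. -/
theorem lipschitz_sup_le_of_L2
    (t θ : ℝ) (ht : 0 < t) (hθ : 0 ≤ θ) (f : ℝ → ℝ)
    (hf_lip : ∀ s ∈ Set.Icc (0:ℝ) t, ∀ s' ∈ Set.Icc (0:ℝ) t, |f s - f s'| ≤ θ * |s - s'|)
    (hft : f t = 0) :
    ∀ s ∈ Set.Icc (0:ℝ) t,
      |f s| ≤ θ * Real.sqrt (∫ τ in (0:ℝ)..t, (f τ)^2)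
        + Real.sqrt (Real.sqrt (∫ τ in (0:ℝ)..t, (f τ)^2)) := by
  intro s hs
  set E := ∫ τ in (0:ℝ)..t, (f τ)^2 with hE_def
  -- continuity of f on [0,t]
  have hcont : ContinuousOn f (Set.Icc 0 t) := by
    apply LipschitzOnWith.continuousOn (K := θ.toNNReal)
    apply LipschitzOnWith.of_dist_le_mul
    intro x hx y hy
    rw [Real.dist_eq, Real.dist_eq, Real.coe_toNNReal θ hθ]
    exact hf_lip x hx y hy
  have hi : IntervalIntegrable (fun τ => (f τ)^2) MeasureTheory.volume 0 t := by
    apply ContinuousOn.intervalIntegrable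
    rw [Set.uIcc_of_le ht.le]
    exact hcont.pow 2
  have hE0 : 0 ≤ E := intervalIntegral.integral_nonneg ht.le (fun u _ => sq_nonneg _)
  set N := Real.sqrt E with hN_def
  have hN0 : 0 ≤ N := Real.sqrt_nonneg _
  have hNsq : N ^ 2 = E := Real.sq_sqrt hE0
  have hsN : 0 ≤ Real.sqrt N := Real.sqrt_nonneg _
  -- key estimate
  have key : ∀ h : ℝ, 0 < h → h ≤ t → θ * h ≤ |f s| → h * (|f s| - θ * h) ^ 2 ≤ E := by
    intro h hh ht' hm
    set a := min s (t - h) with ha_def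
    have ha0 : 0 ≤ a := le_min hs.1 (by linarith)
    have haht : a + h ≤ t := by
      have : a ≤ t - h := min_le_right _ _
      linarith
    have has : a ≤ s := min_le_left _ _
    have hsa : s - h ≤ a := le_min (by linarith) (by linarith [hs.2])
    have hsub : Set.Icc a (a + h) ⊆ Set.Icc 0 t := Set.Icc_subset_Icc ha0 haht
    have hpt : ∀ τ ∈ Set.Icc a (a + h), (|f s| - θ * h) ^ 2 ≤ (f τ)^2 := by
      intro τ hτ
      have hts : |s - τ| ≤ h := by
        rw [abs_le]
        constructor <;> [linarith [hτ.2]; linarith [hτ.1]]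
      have hlip := hf_lip s hs τ (hsub hτ)
      have h1 : |f s| - |f τ| ≤ θ * h := by
        have h2 : θ * |s - τ| ≤ θ * h := mul_le_mul_of_nonneg_left hts hθ
        have h3 := abs_sub_abs_le_abs_sub (f s) (f τ)
        linarith
      have h4 : |f s| - θ * h ≤ |f τ| := by linarith
      have h5 : -|f τ| ≤ |f s| - θ * h := by
        have := abs_nonneg (f τ); linarith
      calc (|f s| - θ * h) ^ 2 ≤ |f τ| ^ 2 := sq_le_sq' h5 h4
        _ = (f τ) ^ 2 := sq_abs _
    have hi' : IntervalIntegrable (fun τ => (f τ)^2) MeasureTheory.volume a (a + h) := by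
      apply hi.mono_set
      rw [Set.uIcc_of_le ht.le, Set.uIcc_of_le (by linarith : a ≤ a + h)]
      exact hsub
    calc h * (|f s| - θ * h) ^ 2
        = ∫ τ in a..(a + h), (|f s| - θ * h) ^ 2 := by
          rw [intervalIntegral.integral_const, smul_eq_mul]; ring_nf
      _ ≤ ∫ τ in a..(a + h), (f τ)^2 :=
          intervalIntegral.integral_mono_on (by linarith) (intervalIntegrable_const) hi' hpt
      _ ≤ E := intervalIntegral.integral_mono_interval ha0 (by linarith) haht
          (Filter.Eventually.of_forall (fun x => sq_nonneg _)) hi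
  by_cases hNt : t ≤ N
  · -- large N case : |f s| ≤ θ t ≤ θ N
    have hlip := hf_lip s hs t (Set.right_mem_Icc.mpr ht.le)
    rw [hft, sub_zero] at hlip
    have habs : |s - t| ≤ t := by
      rw [abs_sub_comm, abs_of_nonneg (by linarith [hs.2])]
      linarith [hs.1]
    have h1 : |f s| ≤ θ * t := le_trans hlip (mul_le_mul_of_nonneg_left habs hθ)
    have h2 : θ * t ≤ θ * N := mul_le_mul_of_nonneg_left hNt hθ
    linarith
  · push_neg at hNt
    by_contra hM
    push_neg at hM
    rcases eq_or_lt_of_le hN0 with hN | hN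
    · -- N = 0
      have hE : E = 0 := by rw [← hNsq, ← hN]; ring
      have hMpos : 0 < |f s| := by
        rw [← hN, mul_zero, Real.sqrt_zero] at hM
        linarith
      set h := min t (|f s| / (2 * (θ + 1))) with hh_def
      have hh : 0 < h := lt_min ht (by positivity)
      have hht : h ≤ t := min_le_left _ _
      have hθh : θ * h ≤ |f s| / 2 := by
        have h2 : h ≤ |f s| / (2 * (θ + 1)) := min_le_right _ _
        have h3 : θ * h ≤ θ * (|f s| / (2 * (θ + 1))) := mul_le_mul_of_nonneg_left h2 hθ
        have h4 : θ * (|f s| / (2 * (θ + 1))) ≤ |f s| / 2 := by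
          rw [← mul_div_assoc, div_le_div_iff₀ (by positivity) two_pos]
          nlinarith [abs_nonneg (f s)]
        linarith
      have hk := key h hh hht (by linarith)
      rw [hE] at hk
      have hpos : 0 < (|f s| - θ * h) ^ 2 := pow_pos (by linarith) 2
      nlinarith [mul_pos hh hpos]
    · -- 0 < N
      have hNle : θ * N ≤ |f s| := by linarith
      have hk := key N hN hNt.le hNle
      rw [← hNsq] at hk
      have h2 : (|f s| - θ * N) ^ 2 ≤ N := by nlinarith
      have h3 := Real.sqrt_le_sqrt h2
      rw [Real.sqrt_sq (by linarith)] at h3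
      linarith
end
end

section
/- With λ₁ as in Theorem 2.3(1) and λ < λ₁, define v_{m+1}^0 := v_Δ^0(x_{m+1}) and v_{m+1}^k := V_{m+1}^k (the infimum of the discrete action at (x_{m+1},t_k)) for each m and 0 < k ≤ k(T). Then the minimizing velocity field ξ* for each V_n^{l+1} satisfies, at every point of G, L^c_ξ(x_m, t_k, ξ*_m^{k+1}) = D_x v_{m+1}^k, equivalently ξ*_m^{k+1} = H_p(x_m, t_k, c + D_x v_{m+1}^k). -/
open scoped BigOperators Classical

noncomputable section

/-- The Legendre transform `L(x,t,ξ) = sup_p {ξp - H(x,t,p)}`. -/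
def Leg (H : ℝ → ℝ → ℝ → ℝ) (x t ξ : ℝ) : ℝ := ⨆ p : ℝ, (ξ * p - H x t p)

/-- `L^c(x,t,ξ) = L(x,t,ξ) - cξ`. -/
def LegC (H : ℝ → ℝ → ℝ → ℝ) (c x t ξ : ℝ) : ℝ := Leg H x t ξ - c * ξ

/-- A velocity field is admissible when its values lie in `[-λ⁻¹, λ⁻¹]`. -/
def Adm (N K : ℕ) (ξ : ℤ → ℕ → ℝ) : Prop := ∀ m k, |ξ m k| ≤ (lam N K)⁻¹

/-- `(x_m, t_k)` belongs to the grid `G` of points reachable by walks from `(x_n, t_{l+1})`: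
`1 ≤ k ≤ l+1`, odd parity, and `|x_m - x_n| ≤ (l+1-k)Δx`. -/
def inG (n : ℤ) (l : ℕ) (m : ℤ) (k : ℕ) : Prop :=
  1 ≤ k ∧ k ≤ l + 1 ∧ Odd (m + (k : ℤ)) ∧ |m - n| ≤ (l : ℤ) + 1 - (k : ℤ)

/-- The discrete stochastic action
`E_n^{l+1}(ξ) = E_{μ(·;ξ)}[Σ_{0<k≤l+1} L^c(γ^k, t_{k-1}, ξ^k_{m(γ^k)}) Δt + v_Δ^0(γ^0)] + h(c) t_{l+1}`. -/
def gridAction (N K : ℕ) (H : ℝ → ℝ → ℝ → ℝ) (c hc : ℝ) (vinit : ℝ → ℝ)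
    (n : ℤ) (l : ℕ) (ξ : ℤ → ℕ → ℝ) : ℝ :=
  (∑ s : Fin (l + 1) → Bool, walkMeasure N K n l ξ s *
      ((∑ k ∈ Finset.Icc 1 (l + 1),
          LegC H c ((pos n l s k : ℝ) * dx N) (((k : ℝ) - 1) * dt K) (ξ (pos n l s k) k) * dt K)
        + vinit ((pos n l s 0 : ℝ) * dx N)))
    + hc * (((l : ℝ) + 1) * dt K)

/-- The value function defined from the discrete action: `v_{m}^0 := v_Δ^0(x_m)` and, for
`k ≥ 1`, `v_m^k := V_m^k = inf_ξ E_m^k(ξ)`, the infimum of the discrete action at `(x_m, t_k)`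
over admissible velocity fields. -/
def Vfun (N K : ℕ) (H : ℝ → ℝ → ℝ → ℝ) (c hc : ℝ) (vinit : ℝ → ℝ) (m : ℤ) (k : ℕ) : ℝ :=
  if k = 0 then vinit ((m : ℝ) * dx N)
  else sInf {y | ∃ ξ, Adm N K ξ ∧ y = gridAction N K H c hc vinit m (k - 1) ξ}

/-!
The action is a finite expectation over backward random walks, so it obeys an exact dynamic
programming principle: `V_n^{l+1}` is the minimum over the apex velocity `z ∈ [-λ⁻¹, λ⁻¹]` of
`(L^c(z) + h) Δt + (1/2 - λz/2) V_{n+1}^l + (1/2 + λz/2) V_{n-1}^l`, and an optimal field is again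
optimal from both successors as soon as both transition probabilities are positive. The Legendre
transform of a strictly convex superlinear `H(x, t, ·)` is differentiable with derivative the
inverse of `H_p`, so this one-step cost is strictly convex in `z`: all optimal fields share their
apex velocity, which Theorem 2.3(1) places in the interior, where the first-order condition reads
`L^c_ξ = D_x v`. Induction down the cone `G` reaches every grid point, and inverting `L_ξ = H_p⁻¹`
gives `ξ = H_p(c + D_x v)`.
-/

open Filter Topology Set

/-- `Leg H x t = legendre (H x t)` holds by `rfl`. -/
def legendre (f : ℝ → ℝ) (ξ : ℝ) : ℝ := ⨆ p : ℝ, (ξ * p - f p)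

section Legendre

variable {f : ℝ → ℝ}

theorem tendsto_mul_sub_cocompact_atBot
    (hsl : Tendsto (fun p => f p / |p|) (comap abs atTop) atTop) (ξ : ℝ) :
    Tendsto (fun p => ξ * p - f p) (cocompact ℝ) atBot := by
  rw [cocompact_eq_atBot_atTop, ← comap_abs_atTop, tendsto_atBot]
  intro b
  filter_upwards [hsl.eventually (eventually_ge_atTop (|ξ| + 1)),
    tendsto_comap.eventually (eventually_ge_atTop (max 1 (-b)))] with p hfp hp
  have hp0 : 0 < |p| := one_pos.trans_le ((le_max_left _ _).trans hp)
  rw [le_div_iff₀ hp0] at hfp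
  nlinarith [le_abs_self (ξ * p), abs_mul ξ p, le_max_right 1 (-b)]

theorem exists_forall_mul_sub_le (hc : Continuous f)
    (hsl : Tendsto (fun p => f p / |p|) (comap abs atTop) atTop) (ξ : ℝ) :
    ∃ p, ∀ q, ξ * q - f q ≤ ξ * p - f p :=
  ((continuous_const.mul continuous_id).sub hc).exists_forall_ge
    (tendsto_mul_sub_cocompact_atBot hsl ξ)

theorem deriv_eq_of_forall_mul_sub_le {ξ p : ℝ} (hd : DifferentiableAt ℝ f p)
    (hp : ∀ q, ξ * q - f q ≤ ξ * p - f p) : deriv f p = ξ := by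
  have hmax : IsLocalMax (fun q => ξ * q - f q) p := Eventually.of_forall hp
  have := hmax.hasDerivAt_eq_zero (((hasDerivAt_id p).const_mul ξ).sub hd.hasDerivAt)
  linarith

variable (hd : Differentiable ℝ f)
  (hsl : Tendsto (fun p => f p / |p|) (comap abs atTop) atTop)
include hd hsl

theorem surjective_deriv_of_superlinear : Function.Surjective (deriv f) := fun ξ =>
  have ⟨p, hp⟩ := exists_forall_mul_sub_le hd.continuous hsl ξ
  ⟨p, deriv_eq_of_forall_mul_sub_le (hd p) hp⟩

variable (hm : StrictMono (deriv f))
include hm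

theorem mul_sub_le_of_strictMono_deriv (p q : ℝ) : deriv f p * q - f q ≤ deriv f p * p - f p := by
  obtain ⟨p', hp'⟩ := exists_forall_mul_sub_le hd.continuous hsl (deriv f p)
  obtain rfl : p' = p := hm.injective (deriv_eq_of_forall_mul_sub_le (hd p') hp')
  exact hp' q

theorem legendre_deriv (p : ℝ) : legendre f (deriv f p) = deriv f p * p - f p :=
  le_antisymm (ciSup_le (mul_sub_le_of_strictMono_deriv hd hsl hm p))
    (le_ciSup ⟨_, forall_mem_range.2 (mul_sub_le_of_strictMono_deriv hd hsl hm p)⟩ p)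

/-- Fenchel–Young at `p` and at `q`. -/
theorem abs_legendre_deriv_sub_le (p q : ℝ) :
    |legendre f (deriv f q) - legendre f (deriv f p) - (deriv f q - deriv f p) * p|
      ≤ |deriv f q - deriv f p| * |q - p| := by
  rw [legendre_deriv hd hsl hm, legendre_deriv hd hsl hm, ← abs_mul, abs_le]
  have := mul_sub_le_of_strictMono_deriv hd hsl hm q p
  have := mul_sub_le_of_strictMono_deriv hd hsl hm p q
  constructor <;> nlinarith [le_abs_self ((deriv f q - deriv f p) * (q - p))]

theorem hasDerivAt_legendre (p : ℝ) : HasDerivAt (legendre f) p (deriv f p) := by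
  set E := hm.orderIsoOfSurjective _ (surjective_deriv_of_superlinear hd hsl)
  have hE : ∀ η, deriv f (E.symm η) = η := E.apply_symm_apply
  have hEp : Tendsto E.symm (𝓝 (deriv f p)) (𝓝 p) := by
    simpa only [show E.symm (deriv f p) = p from E.symm_apply_apply p] using
      E.symm.continuous.tendsto (deriv f p)
  rw [hasDerivAt_iff_isLittleO, Asymptotics.isLittleO_iff]
  intro ε hε
  filter_upwards [hEp.eventually (Metric.closedBall_mem_nhds p hε)] with η hη
  rw [Real.dist_eq] at hη
  have := abs_legendre_deriv_sub_le hd hsl hm p (E.symm η)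
  rw [hE] at this
  simp only [Real.norm_eq_abs, smul_eq_mul]
  nlinarith [abs_nonneg (η - deriv f p)]

end Legendre

section LegC

variable {H : ℝ → ℝ → ℝ → ℝ} {c x t : ℝ} (hd : Differentiable ℝ (H x t))
  (hsl : Tendsto (fun p => H x t p / |p|) (comap abs atTop) atTop) (hm : StrictMono (deriv (H x t)))
include hd hsl hm

theorem hasDerivAt_LegC (p : ℝ) : HasDerivAt (LegC H c x t) (p - c) (deriv (H x t) p) :=
  ((hasDerivAt_legendre hd hsl hm p).sub ((hasDerivAt_id _).const_mul c)).congr_deriv (by ring)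

theorem differentiable_LegC : Differentiable ℝ (LegC H c x t) := fun z => by
  obtain ⟨p, rfl⟩ := surjective_deriv_of_superlinear hd hsl z
  exact (hasDerivAt_LegC hd hsl hm p).differentiableAt

theorem strictConvexOn_LegC : StrictConvexOn ℝ univ (LegC H c x t) := by
  refine StrictMono.strictConvexOn_univ_of_deriv (differentiable_LegC hd hsl hm).continuous ?_
  intro a b hab
  obtain ⟨p, rfl⟩ := surjective_deriv_of_superlinear hd hsl a
  obtain ⟨q, rfl⟩ := surjective_deriv_of_superlinear hd hsl b
  rw [(hasDerivAt_LegC hd hsl hm p).deriv, (hasDerivAt_LegC hd hsl hm q).deriv]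
  linarith [hm.lt_iff_lt.1 hab]

theorem eq_deriv_of_deriv_LegC_eq {z D : ℝ} (h : deriv (LegC H c x t) z = D) :
    z = deriv (H x t) (c + D) := by
  obtain ⟨p, rfl⟩ := surjective_deriv_of_superlinear hd hsl z
  rw [(hasDerivAt_LegC hd hsl hm p).deriv] at h
  rw [← h, add_sub_cancel]

end LegC

theorem dx_pos {N : ℕ} (hN : 0 < N) : 0 < dx N := by
  have : (0 : ℝ) < N := Nat.cast_pos.2 hN
  simp only [dx]
  positivity

theorem dt_pos {K : ℕ} (hK : 0 < K) : 0 < dt K := by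
  have : (0 : ℝ) < K := Nat.cast_pos.2 hK
  simp only [dt]
  positivity

theorem lam_pos {N K : ℕ} (hN : 0 < N) (hK : 0 < K) : 0 < lam N K :=
  div_pos (dt_pos hK) (dx_pos hN)

theorem transitionProb_nonneg {N K : ℕ} {z : ℝ} (hlam : 0 < lam N K) (hz : |z| ≤ (lam N K)⁻¹) :
    0 ≤ 1 / 2 - lam N K / 2 * z ∧ 0 ≤ 1 / 2 + lam N K / 2 * z := by
  have := mul_le_mul_of_nonneg_left hz hlam.le
  rw [mul_inv_cancel₀ hlam.ne'] at this
  constructor <;> nlinarith [le_abs_self z, neg_abs_le z]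

theorem transitionProb_pos {N K : ℕ} {z : ℝ} (hlam : 0 < lam N K) (hz : |z| < (lam N K)⁻¹) :
    0 < 1 / 2 - lam N K / 2 * z ∧ 0 < 1 / 2 + lam N K / 2 * z := by
  have := mul_lt_mul_of_pos_left hz hlam
  rw [mul_inv_cancel₀ hlam.ne'] at this
  constructor <;> nlinarith [le_abs_self z, neg_abs_le z]

section Walks

variable {N K : ℕ}

theorem pos_of_le {n : ℤ} {l k : ℕ} (s : Fin (l + 1) → Bool) (h : l + 1 ≤ k) : pos n l s k = n := by
  rw [pos, Finset.sum_eq_zero fun j _ => if_neg (by omega), add_zero]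

theorem pos_snoc (n : ℤ) (l : ℕ) (s : Fin (l + 1) → Bool) (b : Bool) {k : ℕ} (hk : k ≤ l + 1) :
    pos n (l + 1) (Fin.snoc s b) k = pos (n + if b then 1 else -1) l s k := by
  simp only [pos, Fin.sum_univ_castSucc, Fin.snoc_castSucc, Fin.snoc_last, Fin.val_castSucc,
    Fin.val_last, if_pos hk]
  ring

theorem walkMeasure_snoc (n : ℤ) (l : ℕ) (ξ : ℤ → ℕ → ℝ) (s : Fin (l + 1) → Bool) (b : Bool) :
    walkMeasure N K n (l + 1) ξ (Fin.snoc s b) =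
      walkMeasure N K (n + if b then 1 else -1) l ξ s *
        if b then 1 / 2 - lam N K / 2 * ξ n (l + 2) else 1 / 2 + lam N K / 2 * ξ n (l + 2) := by
  rw [walkMeasure, Fin.prod_univ_castSucc]
  congr 1
  · refine Finset.prod_congr rfl fun j _ => ?_
    simp only [Fin.snoc_castSucc, Fin.val_castSucc, pos_snoc n l s b (Nat.succ_le_succ j.is_le)]
  · simp only [Fin.snoc_last, Fin.val_last, pos_of_le _ (le_refl (l + 1 + 1))]

theorem sum_fun_fin_succ_bool {l : ℕ} (F : (Fin (l + 1 + 1) → Bool) → ℝ) :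
    ∑ s, F s = ∑ s : Fin (l + 1) → Bool, (F (Fin.snoc s true) + F (Fin.snoc s false)) := by
  rw [← (Fin.snocEquiv fun _ => Bool).sum_comp, Fintype.sum_prod_type, Fintype.sum_bool,
    ← Finset.sum_add_distrib]
  rfl

theorem sum_fun_fin_one_bool (F : (Fin 1 → Bool) → ℝ) :
    ∑ s, F s = F (fun _ => true) + F (fun _ => false) := by
  rw [← (Equiv.funUnique (Fin 1) Bool).symm.sum_comp, Fintype.sum_bool]
  rfl

theorem walkMeasure_zero (n : ℤ) (ξ : ℤ → ℕ → ℝ) (b : Bool) :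
    walkMeasure N K n 0 ξ (fun _ => b) =
      if b then 1 / 2 - lam N K / 2 * ξ n 1 else 1 / 2 + lam N K / 2 * ξ n 1 := by
  rw [walkMeasure, Fin.prod_univ_one, Fin.val_zero, pos_of_le _ (le_refl (0 + 1))]

theorem sum_walkMeasure (l : ℕ) (n : ℤ) (ξ : ℤ → ℕ → ℝ) :
    ∑ s, walkMeasure N K n l ξ s = 1 := by
  induction l generalizing n with
  | zero =>
    rw [sum_fun_fin_one_bool, walkMeasure_zero, walkMeasure_zero]
    simp only [if_true, Bool.false_eq_true, if_false]
    ring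
  | succ l ih =>
    simp only [sum_fun_fin_succ_bool, walkMeasure_snoc, if_true, Bool.false_eq_true, if_false,
      Finset.sum_add_distrib, ← Finset.sum_mul, ih]
    ring

end Walks

def pathCost (N K : ℕ) (H : ℝ → ℝ → ℝ → ℝ) (c : ℝ) (vinit : ℝ → ℝ) (n : ℤ) (l : ℕ)
    (ξ : ℤ → ℕ → ℝ) (s : Fin (l + 1) → Bool) : ℝ :=
  (∑ k ∈ Finset.Icc 1 (l + 1),
      LegC H c ((pos n l s k : ℝ) * dx N) (((k : ℝ) - 1) * dt K) (ξ (pos n l s k) k) * dt K)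
    + vinit ((pos n l s 0 : ℝ) * dx N)

/-- The quantity minimised in one step of the dynamic programming principle at `(x, t)`,
with `A`, `B` the values at the two successors and `z` the velocity. -/
def stepCost (N K : ℕ) (H : ℝ → ℝ → ℝ → ℝ) (c hc x t A B z : ℝ) : ℝ :=
  (LegC H c x t z + hc) * dt K + (1 / 2 - lam N K / 2 * z) * A + (1 / 2 + lam N K / 2 * z) * B

/-- Indexed like `Vfun`: `actionValue ξ m (k + 1) = gridAction m k ξ`, the action of `ξ` from
`(x_m, t_{k+1})`, and the initial datum at `k = 0`. -/
def actionValue (N K : ℕ) (H : ℝ → ℝ → ℝ → ℝ) (c hc : ℝ) (vinit : ℝ → ℝ)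
    (ξ : ℤ → ℕ → ℝ) : ℤ → ℕ → ℝ
  | m, 0 => vinit ((m : ℝ) * dx N)
  | m, k + 1 => gridAction N K H c hc vinit m k ξ

section Bellman

variable {N K : ℕ} {H : ℝ → ℝ → ℝ → ℝ} {c hc : ℝ} {vinit : ℝ → ℝ}

theorem gridAction_eq_sum_pathCost (n : ℤ) (l : ℕ) (ξ : ℤ → ℕ → ℝ) :
    gridAction N K H c hc vinit n l ξ =
      ∑ s, walkMeasure N K n l ξ s * pathCost N K H c vinit n l ξ s + hc * (((l : ℝ) + 1) * dt K) :=
  rfl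

theorem pathCost_snoc (n : ℤ) (l : ℕ) (ξ : ℤ → ℕ → ℝ) (s : Fin (l + 1) → Bool) (b : Bool) :
    pathCost N K H c vinit n (l + 1) ξ (Fin.snoc s b) =
      LegC H c ((n : ℝ) * dx N) (((l + 1 : ℕ) : ℝ) * dt K) (ξ n (l + 2)) * dt K
        + pathCost N K H c vinit (n + if b then 1 else -1) l ξ s := by
  rw [pathCost, pathCost, Finset.sum_Icc_succ_top (by omega), pos_of_le _ le_rfl,
    pos_snoc n l s b (Nat.zero_le _)]
  rw [Finset.sum_congr rfl fun k hk => by rw [pos_snoc n l s b (Finset.mem_Icc.1 hk).2],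
    show ((l + 1 + 1 : ℕ) : ℝ) - 1 = ((l + 1 : ℕ) : ℝ) by push_cast; ring]
  ring

theorem gridAction_eq_stepCost (n : ℤ) (l : ℕ) (ξ : ℤ → ℕ → ℝ) :
    gridAction N K H c hc vinit n l ξ =
      stepCost N K H c hc ((n : ℝ) * dx N) ((l : ℝ) * dt K)
        (actionValue N K H c hc vinit ξ (n + 1) l) (actionValue N K H c hc vinit ξ (n - 1) l)
        (ξ n (l + 1)) := by
  cases l with
  | zero =>
    have hpos (b : Bool) : pos n 0 (fun _ => b) 0 = n + if b then 1 else -1 := by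
      simp [pos]
    rw [gridAction_eq_sum_pathCost, sum_fun_fin_one_bool]
    simp only [pathCost, walkMeasure_zero, hpos, Finset.Icc_self, Finset.sum_singleton,
      pos_of_le _ (le_refl (0 + 1)), stepCost, actionValue]
    push_cast
    ring_nf
  | succ l =>
    set T := LegC H c ((n : ℝ) * dx N) (((l + 1 : ℕ) : ℝ) * dt K) (ξ n (l + 2)) * dt K
    have hsplit (s : Fin (l + 1) → Bool) :
        walkMeasure N K n (l + 1) ξ (Fin.snoc s true)
            * pathCost N K H c vinit n (l + 1) ξ (Fin.snoc s true)
          + walkMeasure N K n (l + 1) ξ (Fin.snoc s false)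
            * pathCost N K H c vinit n (l + 1) ξ (Fin.snoc s false)
        = T * (1 / 2 - lam N K / 2 * ξ n (l + 2)) * walkMeasure N K (n + 1) l ξ s
          + T * (1 / 2 + lam N K / 2 * ξ n (l + 2)) * walkMeasure N K (n - 1) l ξ s
          + (1 / 2 - lam N K / 2 * ξ n (l + 2))
            * (walkMeasure N K (n + 1) l ξ s * pathCost N K H c vinit (n + 1) l ξ s)
          + (1 / 2 + lam N K / 2 * ξ n (l + 2))
            * (walkMeasure N K (n - 1) l ξ s * pathCost N K H c vinit (n - 1) l ξ s) := by
      simp only [walkMeasure_snoc, pathCost_snoc, if_true, Bool.false_eq_true, if_false,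
        ← sub_eq_add_neg]
      ring
    rw [gridAction_eq_sum_pathCost, sum_fun_fin_succ_bool, Finset.sum_congr rfl fun s _ => hsplit s]
    simp only [Finset.sum_add_distrib, ← Finset.mul_sum, sum_walkMeasure, stepCost, actionValue,
      gridAction_eq_sum_pathCost, T]
    push_cast
    ring

end Bellman

section StepCost

variable {N K : ℕ} {H : ℝ → ℝ → ℝ → ℝ} {c hc x t A B : ℝ}

theorem stepCost_mono (hlam : 0 < lam N K) {A' B' z : ℝ} (hA : A ≤ A') (hB : B ≤ B')
    (hz : |z| ≤ (lam N K)⁻¹) :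
    stepCost N K H c hc x t A B z ≤ stepCost N K H c hc x t A' B' z := by
  obtain ⟨hw₁, hw₂⟩ := transitionProb_nonneg hlam hz
  simp only [stepCost]
  nlinarith [mul_le_mul_of_nonneg_left hA hw₁, mul_le_mul_of_nonneg_left hB hw₂]

theorem eq_of_stepCost_eq (hlam : 0 < lam N K) {A' B' z : ℝ} (hA : A ≤ A') (hB : B ≤ B')
    (hz : |z| < (lam N K)⁻¹)
    (h : stepCost N K H c hc x t A' B' z = stepCost N K H c hc x t A B z) : A' = A ∧ B' = B := by
  obtain ⟨hw₁, hw₂⟩ := transitionProb_pos hlam hz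
  have hsum : (1 / 2 - lam N K / 2 * z) * (A' - A) + (1 / 2 + lam N K / 2 * z) * (B' - B) = 0 := by
    simp only [stepCost] at h
    linarith
  have hA0 := mul_nonneg hw₁.le (sub_nonneg.2 hA)
  have hB0 := mul_nonneg hw₂.le (sub_nonneg.2 hB)
  obtain ⟨hA', hB'⟩ := (add_eq_zero_iff_of_nonneg hA0 hB0).1 hsum
  exact ⟨sub_eq_zero.1 ((mul_eq_zero.1 hA').resolve_left hw₁.ne'),
    sub_eq_zero.1 ((mul_eq_zero.1 hB').resolve_left hw₂.ne')⟩

theorem continuous_stepCost (hL : Continuous (LegC H c x t)) :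
    Continuous (stepCost N K H c hc x t A B) := by
  unfold stepCost
  fun_prop

theorem hasDerivAt_stepCost {d z : ℝ} (hd : HasDerivAt (LegC H c x t) d z) :
    HasDerivAt (stepCost N K H c hc x t A B) (d * dt K + lam N K / 2 * (B - A)) z :=
  ((((hd.add_const hc).mul_const (dt K)).add
    ((((hasDerivAt_id z).const_mul (lam N K / 2)).const_sub (1 / 2)).mul_const A)).add
    ((((hasDerivAt_id z).const_mul (lam N K / 2)).const_add (1 / 2)).mul_const B)).congr_deriv
    (by ring)

theorem strictConvexOn_stepCost (hK : 0 < K) (hconv : StrictConvexOn ℝ univ (LegC H c x t)) :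
    StrictConvexOn ℝ univ (stepCost N K H c hc x t A B) := by
  have hdt := dt_pos hK
  refine ⟨convex_univ, fun y _ z _ hyz a b ha hb hab => ?_⟩
  have := hconv.2 trivial trivial hyz ha hb hab
  simp only [stepCost, smul_eq_mul] at this ⊢
  linear_combination dt K * this - (hc * dt K + A / 2 + B / 2) * hab

/-- `λ = Δt / Δx` turns the vanishing derivative of the one-step cost into a centred difference. -/
theorem deriv_LegC_eq_of_isMinOn (hN : 0 < N) (hK : 0 < K) {z : ℝ} (hz : |z| < (lam N K)⁻¹)
    (hmin : IsMinOn (stepCost N K H c hc x t A B) (Icc (-(lam N K)⁻¹) (lam N K)⁻¹) z)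
    (hd : DifferentiableAt ℝ (LegC H c x t) z) :
    deriv (LegC H c x t) z = (A - B) / (2 * dx N) := by
  obtain ⟨hz₁, hz₂⟩ := abs_lt.1 hz
  have h := (hmin.isLocalMin (Icc_mem_nhds hz₁ hz₂)).hasDerivAt_eq_zero
    (hasDerivAt_stepCost hd.hasDerivAt)
  have hdx := dx_pos hN
  have hdt := dt_pos hK
  rw [lam] at h
  field_simp at h
  rw [eq_div_iff (by positivity)]
  nlinarith

end StepCost

/-- A velocity field minimising the one-step cost against `Vfun` at every grid point; it realises
all the infima defining `Vfun` at once. -/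
def optimalField (N K : ℕ) (H : ℝ → ℝ → ℝ → ℝ) (c hc : ℝ) (vinit : ℝ → ℝ) : ℤ → ℕ → ℝ
  | _, 0 => 0
  | m, k + 1 => Classical.epsilon fun z => z ∈ Icc (-(lam N K)⁻¹) (lam N K)⁻¹ ∧
      IsMinOn (stepCost N K H c hc ((m : ℝ) * dx N) ((k : ℝ) * dt K)
        (Vfun N K H c hc vinit (m + 1) k) (Vfun N K H c hc vinit (m - 1) k))
        (Icc (-(lam N K)⁻¹) (lam N K)⁻¹) z

def IsOptimalField (N K : ℕ) (H : ℝ → ℝ → ℝ → ℝ) (c hc : ℝ) (vinit : ℝ → ℝ)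
    (ξ : ℤ → ℕ → ℝ) (n : ℤ) (k : ℕ) : Prop :=
  Adm N K ξ ∧ actionValue N K H c hc vinit ξ n k = Vfun N K H c hc vinit n k

section DynamicProgramming

variable {N K : ℕ} {H : ℝ → ℝ → ℝ → ℝ} {c hc : ℝ} {vinit : ℝ → ℝ}

theorem optimalField_spec (hlam : 0 < lam N K) (hL : ∀ x t, Continuous (LegC H c x t))
    (m : ℤ) (k : ℕ) :
    optimalField N K H c hc vinit m (k + 1) ∈ Icc (-(lam N K)⁻¹) (lam N K)⁻¹ ∧
      IsMinOn (stepCost N K H c hc ((m : ℝ) * dx N) ((k : ℝ) * dt K)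
        (Vfun N K H c hc vinit (m + 1) k) (Vfun N K H c hc vinit (m - 1) k))
        (Icc (-(lam N K)⁻¹) (lam N K)⁻¹) (optimalField N K H c hc vinit m (k + 1)) :=
  Classical.epsilon_spec <| isCompact_Icc.exists_isMinOn
    (nonempty_Icc.2 (neg_le_self (inv_nonneg.2 hlam.le)))
    (continuous_stepCost (hL _ _)).continuousOn

theorem adm_optimalField (hlam : 0 < lam N K) (hL : ∀ x t, Continuous (LegC H c x t)) :
    Adm N K (optimalField N K H c hc vinit) := by
  rintro m (_ | k)
  · simpa [optimalField] using hlam.le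
  · exact abs_le.2 (optimalField_spec hlam hL m k).1

theorem Vfun_eq_actionValue_of_forall_le {ζ : ℤ → ℕ → ℝ} {m : ℤ} {k : ℕ} (hζ : Adm N K ζ)
    (h : ∀ ξ, Adm N K ξ →
      actionValue N K H c hc vinit ζ m k ≤ actionValue N K H c hc vinit ξ m k) :
    Vfun N K H c hc vinit m k = actionValue N K H c hc vinit ζ m k := by
  cases k with
  | zero => rfl
  | succ k =>
    simp only [Vfun, Nat.add_one_ne_zero, if_false, Nat.add_sub_cancel]
    exact IsLeast.csInf_eq ⟨⟨ζ, hζ, rfl⟩, by rintro y ⟨ξ, hξ, rfl⟩; exact h ξ hξ⟩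

theorem actionValue_optimalField_le (hlam : 0 < lam N K) (hL : ∀ x t, Continuous (LegC H c x t))
    (k : ℕ) : ∀ (m : ℤ) (ξ : ℤ → ℕ → ℝ), Adm N K ξ →
      actionValue N K H c hc vinit (optimalField N K H c hc vinit) m k
        ≤ actionValue N K H c hc vinit ξ m k := by
  induction k with
  | zero => exact fun _ _ _ => le_rfl
  | succ k ih =>
    intro m ξ hξ
    have hV (m' : ℤ) := Vfun_eq_actionValue_of_forall_le (adm_optimalField hlam hL) (ih m')
    calc actionValue N K H c hc vinit (optimalField N K H c hc vinit) m (k + 1)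
        = stepCost N K H c hc ((m : ℝ) * dx N) ((k : ℝ) * dt K)
            (Vfun N K H c hc vinit (m + 1) k) (Vfun N K H c hc vinit (m - 1) k)
            (optimalField N K H c hc vinit m (k + 1)) := by
          rw [hV, hV]; exact gridAction_eq_stepCost m k _
      _ ≤ stepCost N K H c hc ((m : ℝ) * dx N) ((k : ℝ) * dt K)
            (Vfun N K H c hc vinit (m + 1) k) (Vfun N K H c hc vinit (m - 1) k) (ξ m (k + 1)) :=
          (optimalField_spec hlam hL m k).2 (abs_le.1 (hξ m (k + 1)))
      _ ≤ stepCost N K H c hc ((m : ℝ) * dx N) ((k : ℝ) * dt K)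
            (actionValue N K H c hc vinit ξ (m + 1) k) (actionValue N K H c hc vinit ξ (m - 1) k)
            (ξ m (k + 1)) := by
          rw [hV, hV]; exact stepCost_mono hlam (ih _ ξ hξ) (ih _ ξ hξ) (hξ m (k + 1))
      _ = actionValue N K H c hc vinit ξ m (k + 1) := (gridAction_eq_stepCost m k ξ).symm

theorem Vfun_eq_actionValue_optimalField (hlam : 0 < lam N K)
    (hL : ∀ x t, Continuous (LegC H c x t)) (m : ℤ) (k : ℕ) :
    Vfun N K H c hc vinit m k = actionValue N K H c hc vinit (optimalField N K H c hc vinit) m k :=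
  Vfun_eq_actionValue_of_forall_le (adm_optimalField hlam hL)
    (actionValue_optimalField_le hlam hL k m)

theorem Vfun_le_actionValue (hlam : 0 < lam N K) (hL : ∀ x t, Continuous (LegC H c x t))
    {ξ : ℤ → ℕ → ℝ} (hξ : Adm N K ξ) (m : ℤ) (k : ℕ) :
    Vfun N K H c hc vinit m k ≤ actionValue N K H c hc vinit ξ m k :=
  (Vfun_eq_actionValue_optimalField hlam hL m k).trans_le
    (actionValue_optimalField_le hlam hL k m ξ hξ)

theorem Vfun_succ_le_stepCost (hlam : 0 < lam N K) (hL : ∀ x t, Continuous (LegC H c x t))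
    (m : ℤ) (k : ℕ) {w : ℝ} (hw : w ∈ Icc (-(lam N K)⁻¹) (lam N K)⁻¹) :
    Vfun N K H c hc vinit m (k + 1) ≤ stepCost N K H c hc ((m : ℝ) * dx N) ((k : ℝ) * dt K)
      (Vfun N K H c hc vinit (m + 1) k) (Vfun N K H c hc vinit (m - 1) k) w := by
  rw [Vfun_eq_actionValue_optimalField hlam hL m, actionValue, gridAction_eq_stepCost,
    ← Vfun_eq_actionValue_optimalField hlam hL, ← Vfun_eq_actionValue_optimalField hlam hL]
  exact (optimalField_spec hlam hL m k).2 hw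

theorem isOptimalField_of_forall_le (hlam : 0 < lam N K) (hL : ∀ x t, Continuous (LegC H c x t))
    {ξ : ℤ → ℕ → ℝ} {n : ℤ} {l : ℕ} (hξ : Adm N K ξ)
    (hmin : ∀ ξ', Adm N K ξ' →
      gridAction N K H c hc vinit n l ξ ≤ gridAction N K H c hc vinit n l ξ') :
    IsOptimalField N K H c hc vinit ξ n (l + 1) :=
  ⟨hξ, le_antisymm
    ((hmin _ (adm_optimalField hlam hL)).trans
      (Vfun_eq_actionValue_optimalField (hc := hc) (vinit := vinit) hlam hL n (l + 1)).ge)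
    (Vfun_le_actionValue hlam hL hξ n _)⟩

end DynamicProgramming

namespace IsOptimalField

variable {N K : ℕ} {H : ℝ → ℝ → ℝ → ℝ} {c hc : ℝ} {vinit : ℝ → ℝ} {ξ : ℤ → ℕ → ℝ} {n : ℤ}
  {l : ℕ}

/-- Both parts come from squeezing the Bellman step through `ξ` between `Vfun n (l + 1)`
and the one-step cost against `Vfun`. -/
theorem stepCost_eq_and_isMinOn (hlam : 0 < lam N K) (hL : ∀ x t, Continuous (LegC H c x t))
    (hξ : IsOptimalField N K H c hc vinit ξ n (l + 1)) :
    stepCost N K H c hc ((n : ℝ) * dx N) ((l : ℝ) * dt K)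
        (actionValue N K H c hc vinit ξ (n + 1) l) (actionValue N K H c hc vinit ξ (n - 1) l)
        (ξ n (l + 1))
      = stepCost N K H c hc ((n : ℝ) * dx N) ((l : ℝ) * dt K)
        (Vfun N K H c hc vinit (n + 1) l) (Vfun N K H c hc vinit (n - 1) l) (ξ n (l + 1)) ∧
    IsMinOn (stepCost N K H c hc ((n : ℝ) * dx N) ((l : ℝ) * dt K)
        (Vfun N K H c hc vinit (n + 1) l) (Vfun N K H c hc vinit (n - 1) l))
      (Icc (-(lam N K)⁻¹) (lam N K)⁻¹) (ξ n (l + 1)) := by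
  have hV (m : ℤ) : Vfun N K H c hc vinit m l ≤ actionValue N K H c hc vinit ξ m l :=
    Vfun_le_actionValue hlam hL hξ.1 m l
  have hle := stepCost_mono (H := H) (c := c) (hc := hc) (x := (n : ℝ) * dx N)
    (t := (l : ℝ) * dt K) hlam (hV (n + 1)) (hV (n - 1)) (hξ.1 n (l + 1))
  have hval := (gridAction_eq_stepCost n l ξ).symm.trans hξ.2
  refine ⟨le_antisymm ?_ hle, isMinOn_iff.2 fun w hw => ?_⟩
  · exact hval.trans_le (Vfun_succ_le_stepCost hlam hL n l (abs_le.1 (hξ.1 n (l + 1))))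
  · exact hle.trans (hval.trans_le (Vfun_succ_le_stepCost hlam hL n l hw))

theorem successors (hlam : 0 < lam N K) (hL : ∀ x t, Continuous (LegC H c x t))
    (hξ : IsOptimalField N K H c hc vinit ξ n (l + 1)) (hz : |ξ n (l + 1)| < (lam N K)⁻¹) :
    IsOptimalField N K H c hc vinit ξ (n + 1) l ∧ IsOptimalField N K H c hc vinit ξ (n - 1) l := by
  obtain ⟨h₁, h₂⟩ := eq_of_stepCost_eq hlam (Vfun_le_actionValue (hc := hc) (vinit := vinit)
    hlam hL hξ.1 (n + 1) l) (Vfun_le_actionValue hlam hL hξ.1 (n - 1) l) hz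
    (hξ.stepCost_eq_and_isMinOn hlam hL).1
  exact ⟨⟨hξ.1, h₁⟩, ⟨hξ.1, h₂⟩⟩

theorem apply_top_eq (hK : 0 < K) (hlam : 0 < lam N K) (hL : ∀ x t, Continuous (LegC H c x t))
    (hconv : StrictConvexOn ℝ univ (LegC H c ((n : ℝ) * dx N) ((l : ℝ) * dt K)))
    {ξ' : ℤ → ℕ → ℝ} (hξ : IsOptimalField N K H c hc vinit ξ n (l + 1))
    (hξ' : IsOptimalField N K H c hc vinit ξ' n (l + 1)) : ξ n (l + 1) = ξ' n (l + 1) :=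
  ((strictConvexOn_stepCost hK hconv).subset (subset_univ _) (convex_Icc _ _)).eq_of_isMinOn
    (hξ.stepCost_eq_and_isMinOn hlam hL).2 (hξ'.stepCost_eq_and_isMinOn hlam hL).2
    (abs_le.1 (hξ.1 n (l + 1))) (abs_le.1 (hξ'.1 n (l + 1)))

theorem deriv_LegC_eq (hN : 0 < N) (hK : 0 < K) (hL : ∀ x t, Differentiable ℝ (LegC H c x t))
    (hξ : IsOptimalField N K H c hc vinit ξ n (l + 1)) (hz : |ξ n (l + 1)| < (lam N K)⁻¹) :
    deriv (LegC H c ((n : ℝ) * dx N) ((l : ℝ) * dt K)) (ξ n (l + 1))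
      = (Vfun N K H c hc vinit (n + 1) l - Vfun N K H c hc vinit (n - 1) l) / (2 * dx N) :=
  deriv_LegC_eq_of_isMinOn hN hK hz
    (hξ.stepCost_eq_and_isMinOn (lam_pos hN hK) fun x t => (hL x t).continuous).2 (hL _ _ _)

end IsOptimalField

theorem inG_top_mem {n : ℤ} {l : ℕ} (hodd : Odd (n + l + 1)) : inG n l n (l + 1) :=
  ⟨by omega, le_rfl, by push_cast; rwa [← add_assoc], by simp⟩

theorem eq_of_inG_top {n m : ℤ} {l : ℕ} (h : inG n l m (l + 1)) : m = n := by
  obtain ⟨-, -, -, h⟩ := h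
  push_cast at h
  rw [abs_le] at h
  omega

/-- Parity forces a grid point below the apex to lie in the cone of one of the two successors. -/
theorem inG_succ_of_lt {n m : ℤ} {l k : ℕ} (hodd : Odd (n + (l + 1 : ℕ) + 1))
    (h : inG n (l + 1) m (k + 1)) (hk : k < l + 1) :
    inG (n + 1) l m (k + 1) ∨ inG (n - 1) l m (k + 1) := by
  obtain ⟨-, -, ⟨a, ha⟩, hm⟩ := h
  obtain ⟨b, hb⟩ := hodd
  rw [abs_le] at hm
  push_cast at ha hb hm
  by_cases hσ : m - n = -((l : ℤ) + 1 - k)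
  · refine Or.inr ⟨by omega, by omega, ⟨a, by push_cast; omega⟩, abs_le.2 ⟨?_, ?_⟩⟩ <;>
      push_cast <;> omega
  · refine Or.inl ⟨by omega, by omega, ⟨a, by push_cast; omega⟩, abs_le.2 ⟨?_, ?_⟩⟩ <;>
      push_cast <;> omega

theorem deriv_LegC_eq_of_isOptimalField {N K : ℕ} {H : ℝ → ℝ → ℝ → ℝ} {c hc : ℝ}
    {vinit : ℝ → ℝ} (hN : 0 < N) (hK : 0 < K) (hL : ∀ x t, Differentiable ℝ (LegC H c x t))
    {M : ℕ} (hint : ∀ (n : ℤ) (l : ℕ), Odd (n + l + 1) → l + 1 ≤ M → ∀ ξ,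
      IsOptimalField N K H c hc vinit ξ n (l + 1) → |ξ n (l + 1)| < (lam N K)⁻¹)
    (l : ℕ) : ∀ (n : ℤ), Odd (n + l + 1) → l + 1 ≤ M → ∀ ξ,
      IsOptimalField N K H c hc vinit ξ n (l + 1) → ∀ (m : ℤ) (k : ℕ), inG n l m (k + 1) →
        deriv (LegC H c ((m : ℝ) * dx N) ((k : ℝ) * dt K)) (ξ m (k + 1))
          = (Vfun N K H c hc vinit (m + 1) k - Vfun N K H c hc vinit (m - 1) k) / (2 * dx N) := by
  induction l with
  | zero =>
    intro n hodd hM ξ hξ m k hG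
    obtain rfl : k = 0 := by have := hG.2.1; omega
    obtain rfl := eq_of_inG_top hG
    exact hξ.deriv_LegC_eq hN hK hL (hint _ 0 hodd hM ξ hξ)
  | succ l ih =>
    intro n hodd hM ξ hξ m k hG
    have hz := hint n (l + 1) hodd hM ξ hξ
    obtain rfl | hk := (Nat.succ_le_succ_iff.1 hG.2.1).eq_or_lt
    · obtain rfl := eq_of_inG_top hG
      exact hξ.deriv_LegC_eq hN hK hL hz
    · obtain ⟨hξ₁, hξ₂⟩ := hξ.successors (lam_pos hN hK) (fun x t => (hL x t).continuous) hz
      obtain ⟨j, hj⟩ := hodd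
      push_cast at hj
      rcases inG_succ_of_lt ⟨j, by push_cast; omega⟩ hG hk with hG | hG
      · exact ih (n + 1) ⟨j, by omega⟩ (by omega) ξ hξ₁ m k hG
      · exact ih (n - 1) ⟨j - 1, by omega⟩ (by omega) ξ hξ₂ m k hG

theorem minimizing_field_euler_lagrange_general
    (N K : ℕ) (hN : 0 < N) (hK : 0 < K)
    (H : ℝ → ℝ → ℝ → ℝ)
    (hH_C2 : ContDiff ℝ 2 (fun q : ℝ × ℝ × ℝ => H q.1 q.2.1 q.2.2))
    (hH_conv : ∀ x t p, 0 < deriv (deriv (H x t)) p)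
    (hH_sl : ∀ x t, Filter.Tendsto (fun p => H x t p / |p|)
      (Filter.comap abs Filter.atTop) Filter.atTop)
    (T : ℝ) (c : ℝ)
    (hFun : ℝ → ℝ) (u0 v0 : ℝ → ℝ)
    (lam1 : ℝ) (hscale : lam N K < lam1)
    (hstab : ∀ (n : ℤ) (l : ℕ), Odd (n + (l : ℤ) + 1) → l + 1 ≤ Nat.floor (T / dt K) →
      ∃ ξs : ℤ → ℕ → ℝ, Adm N K ξs ∧
        (∀ ξ : ℤ → ℕ → ℝ, Adm N K ξ →
          gridAction N K H c (hFun c) (vD0 N u0 v0) n l ξs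
            ≤ gridAction N K H c (hFun c) (vD0 N u0 v0) n l ξ) ∧
        (∀ (m : ℤ) (k : ℕ), inG n l m k → |ξs m k| ≤ lam1⁻¹))
 :
    ∀ (n : ℤ) (l : ℕ), Odd (n + (l : ℤ) + 1) → l + 1 ≤ Nat.floor (T / dt K) →
    ∀ ξs : ℤ → ℕ → ℝ, Adm N K ξs →
      (∀ ξ : ℤ → ℕ → ℝ, Adm N K ξ →
        gridAction N K H c (hFun c) (vD0 N u0 v0) n l ξs
          ≤ gridAction N K H c (hFun c) (vD0 N u0 v0) n l ξ) →
      ∀ (m : ℤ) (k : ℕ), inG n l m (k + 1) →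
        deriv (fun z => LegC H c ((m : ℝ) * dx N) ((k : ℝ) * dt K) z) (ξs m (k + 1))
            = (Vfun N K H c (hFun c) (vD0 N u0 v0) (m + 1) k
                - Vfun N K H c (hFun c) (vD0 N u0 v0) (m - 1) k) / (2 * dx N) ∧
          ξs m (k + 1) = deriv (H ((m : ℝ) * dx N) ((k : ℝ) * dt K))
            (c + (Vfun N K H c (hFun c) (vD0 N u0 v0) (m + 1) k
                - Vfun N K H c (hFun c) (vD0 N u0 v0) (m - 1) k) / (2 * dx N)) := by
  have hd (x t : ℝ) : Differentiable ℝ (H x t) :=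
    (hH_C2.comp (contDiff_const.prodMk (contDiff_const.prodMk contDiff_id))).differentiable
      two_ne_zero
  have hm (x t : ℝ) : StrictMono (deriv (H x t)) := strictMono_of_deriv_pos (hH_conv x t)
  have hlam := lam_pos hN hK
  have hL (x t : ℝ) := differentiable_LegC (c := c) (hd x t) (hH_sl x t) (hm x t)
  have hLc (x t : ℝ) := (hL x t).continuous
  -- Theorem 2.3(1) supplies an optimal field with interior velocities; by strict convexity of
  -- the one-step cost, every optimal field has the same velocity at the apex.
  have hint : ∀ (n : ℤ) (l : ℕ), Odd (n + l + 1) → l + 1 ≤ ⌊T / dt K⌋₊ → ∀ ξ,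
      IsOptimalField N K H c (hFun c) (vD0 N u0 v0) ξ n (l + 1) → |ξ n (l + 1)| < (lam N K)⁻¹ := by
    intro n l hodd hl ξ hξ
    obtain ⟨ξ', hξ'adm, hξ'min, hξ'bd⟩ := hstab n l hodd hl
    rw [hξ.apply_top_eq hK hlam hLc (strictConvexOn_LegC (hd _ _) (hH_sl _ _) (hm _ _))
      (isOptimalField_of_forall_le hlam hLc hξ'adm hξ'min)]
    exact (hξ'bd n (l + 1) (inG_top_mem hodd)).trans_lt (inv_strictAnti₀ hlam hscale)
  intro n l hodd hl ξ hξ hmin m k hG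
  have hEL := deriv_LegC_eq_of_isOptimalField hN hK hL hint l n hodd hl ξ
    (isOptimalField_of_forall_le hlam hLc hξ hmin) m k hG
  exact ⟨hEL, eq_deriv_of_deriv_LegC_eq (hd _ _) (hH_sl _ _) (hm _ _) hEL⟩

/-- Theorem 2.3.2: with `λ₁` as in Theorem 2.3(1) and `λ < λ₁`, defining
`v_{m+1}^k` from the infima `V_{m+1}^k` of the discrete action (and `v_Δ^0` at `k = 0`),
every minimizing velocity field `ξ*` for `V_n^{l+1}` satisfies on `G`
`L^c_ξ(x_m, t_k, ξ*_m^{k+1}) = D_x v_{m+1}^k`, equivalently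
`ξ*_m^{k+1} = H_p(x_m, t_k, c + D_x v_{m+1}^k)`. -/
theorem minimizing_field_euler_lagrange
    (N K : ℕ) (hN : 0 < N) (hK : 0 < K)
    (H : ℝ → ℝ → ℝ → ℝ)
    (hH_C2 : ContDiff ℝ 2 (fun q : ℝ × ℝ × ℝ => H q.1 q.2.1 q.2.2))
    (hH_perx : ∀ x t p, H (x + 1) t p = H x t p)
    (hH_pert : ∀ x t p, H x (t + 1) p = H x t p)
    (hH_conv : ∀ x t p, 0 < deriv (deriv (H x t)) p)
    (hH_sl : ∀ x t, Filter.Tendsto (fun p => H x t p / |p|)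
      (Filter.comap abs Filter.atTop) Filter.atTop)
    (hH_A4 : ∃ α > 0, ∀ x t ξ, |deriv (fun y => Leg H y t ξ) x| ≤ α * (|Leg H x t ξ| + 1))
    (T : ℝ) (hT : 0 < T) (c0 c1 c : ℝ) (hc : c ∈ Set.Icc c0 c1)
    (r : ℝ) (hr : 0 < r) (hFun : ℝ → ℝ) (u0 v0 : ℝ → ℝ)
    (hu0_int : ∀ a b : ℝ, IntervalIntegrable u0 MeasureTheory.volume a b)
    (hu0_per : ∀ y, u0 (y + 1) = u0 y)
    (hu0_mean : (∫ y in (0:ℝ)..1, u0 y) = 0)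
    (hu0_bd : ∀ y, |u0 y| ≤ r)
    (hv0_bd : ∀ y, |v0 y| ≤ r)
    (hv0_deriv : ∀ x, v0 x = v0 0 + ∫ y in (0:ℝ)..x, u0 y)
    (lam1 : ℝ) (hlam1 : 0 < lam1) (hscale : lam N K < lam1)
    (hstab : ∀ (n : ℤ) (l : ℕ), Odd (n + (l : ℤ) + 1) → l + 1 ≤ Nat.floor (T / dt K) →
      ∃ ξs : ℤ → ℕ → ℝ, Adm N K ξs ∧
        (∀ ξ : ℤ → ℕ → ℝ, Adm N K ξ →
          gridAction N K H c (hFun c) (vD0 N u0 v0) n l ξs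
            ≤ gridAction N K H c (hFun c) (vD0 N u0 v0) n l ξ) ∧
        (∀ (m : ℤ) (k : ℕ), inG n l m k → |ξs m k| ≤ lam1⁻¹))
 :
    ∀ (n : ℤ) (l : ℕ), Odd (n + (l : ℤ) + 1) → l + 1 ≤ Nat.floor (T / dt K) →
    ∀ ξs : ℤ → ℕ → ℝ, Adm N K ξs →
      (∀ ξ : ℤ → ℕ → ℝ, Adm N K ξ →
        gridAction N K H c (hFun c) (vD0 N u0 v0) n l ξs
          ≤ gridAction N K H c (hFun c) (vD0 N u0 v0) n l ξ) →
      ∀ (m : ℤ) (k : ℕ), inG n l m (k + 1) →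
        deriv (fun z => LegC H c ((m : ℝ) * dx N) ((k : ℝ) * dt K) z) (ξs m (k + 1))
            = (Vfun N K H c (hFun c) (vD0 N u0 v0) (m + 1) k
                - Vfun N K H c (hFun c) (vD0 N u0 v0) (m - 1) k) / (2 * dx N) ∧
          ξs m (k + 1) = deriv (H ((m : ℝ) * dx N) ((k : ℝ) * dt K))
            (c + (Vfun N K H c (hFun c) (vD0 N u0 v0) (m + 1) k
                - Vfun N K H c (hFun c) (vD0 N u0 v0) (m - 1) k) / (2 * dx N)) :=
  minimizing_field_euler_lagrange_general N K hN hK H hH_C2 hH_conv hH_sl T c hFun u0 v0 lam1 hscale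
    hstab
end
end
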